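/- arXiv:2604.00192 — 12 statements merged into one kernel-verified Lean document; each statement's English description precedes it below -/
import Mathlib

section
/- Let g be a smooth Riemannian metric on an open set U ⊆ E, let f : E → ℝ be smooth with g-gradient G satisfying G x ≠ 0 for all x ∈ U, and let λ : U → ℝ be smooth. Define Z : U → E by Z x := (g x (G x) (G x))⁻¹ • ((fderiv ℝ G x) (G x) + Γ^g x (G x) (G x) − λ x • G x), and define the Christoffel form Γ̃ by Γ̃ x u v := Γ^g x u v − (g x u v) • Z x. Then: (i) Γ̃ is symmetric, i.e. Γ̃ x u v = Γ̃ x v u for all x ∈ U, u v : E; (ii) Γ̃ straightens f with factor λ, i.e. (fderiv ℝ G x) (G x) + Γ̃ x (G x) (G x) = λ x • G x for all x ∈ U; and (iii) consequently every C¹ curve γ : ℝ → U with deriv γ t = G (γ t) for all t satisfies deriv (deriv γ) t + Γ̃ (γ t) (deriv γ t) (deriv γ t) = λ (γ t) • deriv γ t, i.e. every gradient curve of f is a pregeodesic of Γ̃. -/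
open scoped Topology

noncomputable section

/-- `E n` is the Euclidean space `ℝ^n`. -/
abbrev E (n : ℕ) := EuclideanSpace ℝ (Fin n)

/-!
The Levi-Civita form `Γ^g` is symmetric, being determined through the nondegenerate `g` by the
Koszul formula, whose right-hand side is symmetric in `u, v`. Subtracting `g x u v • Z x`
preserves this symmetry, and `Z` is chosen so that on `(G, G)` the correction exactly cancels
the defect `∇^g_G G - λ G`. Along a gradient curve `γ' = G ∘ γ` the chain rule gives
`γ'' = DG(γ) γ'`, so the straightening identity at `γ t` is the pregeodesic equation.
-/

section

variable {V : Type*} [NormedAddCommGroup V] [NormedSpace ℝ V]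

theorem eq_of_forall_apply_eq_of_posDef {B : V →L[ℝ] V →L[ℝ] ℝ} (hB : ∀ v, v ≠ 0 → 0 < B v v)
    {a b : V} (h : ∀ w, B a w = B b w) : a = b := by
  by_contra hab
  have hpos := hB (a - b) (sub_ne_zero.mpr hab)
  simp [h] at hpos

theorem christoffel_symm_of_koszul {g : V → V →L[ℝ] V →L[ℝ] ℝ} {Γ : V → V → V} {x : V}
    (hsymm : ∀ᶠ y in 𝓝 x, ∀ u v, g y u v = g y v u) (hpos : ∀ v, v ≠ 0 → 0 < g x v v)
    (hΓ : ∀ u v w, 2 * g x (Γ u v) w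
      = fderiv ℝ (fun y => g y v w) x u + fderiv ℝ (fun y => g y u w) x v
        - fderiv ℝ (fun y => g y u v) x w)
    (u v : V) : Γ u v = Γ v u := by
  refine eq_of_forall_apply_eq_of_posDef hpos fun w => ?_
  have hg_uv : fderiv ℝ (fun y => g y u v) x = fderiv ℝ (fun y => g y v u) x :=
    Filter.EventuallyEq.fderiv_eq (hsymm.mono fun y hy => hy u v)
  have huv := hΓ u v w
  have hvu := hΓ v u w
  rw [hg_uv] at huv
  linarith

theorem deriv_deriv_of_deriv_eq_comp {γ : ℝ → V} {G : V → V} (hγ : Differentiable ℝ γ)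
    (hγG : ∀ t, deriv γ t = G (γ t)) {t : ℝ} (hG : DifferentiableAt ℝ G (γ t)) :
    deriv (deriv γ) t = fderiv ℝ G (γ t) (G (γ t)) := by
  rw [funext hγG, ← hγG t]
  exact (hG.hasFDerivAt.comp_hasDerivAt t (hγ t).hasDerivAt).deriv

end

theorem straightening_connection_exists_general
    (n : ℕ)
    (U : Set (E n)) (hU : IsOpen U)
    -- a smooth Riemannian metric on `U`
    (g : E n → E n →L[ℝ] E n →L[ℝ] ℝ)
    (hg_symm : ∀ x ∈ U, ∀ u v : E n, g x u v = g x v u)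
    (hg_pos : ∀ x ∈ U, ∀ v : E n, v ≠ 0 → 0 < g x v v)
    -- a smooth function `f` with `g`-gradient `G`, nonvanishing on `U`
    (G : E n → E n) (hG_smooth : ContDiffOn ℝ (⊤ : ℕ∞) G U)
    (hG_ne : ∀ x ∈ U, G x ≠ 0)
    -- a smooth factor `λ`
    (lam : E n → ℝ)
    -- the Levi-Civita Christoffel form of `g`
    (Γg : E n → E n →L[ℝ] E n →L[ℝ] E n)
    (hΓg : ∀ x ∈ U, ∀ u v w : E n,
      2 * g x (Γg x u v) w
        = fderiv ℝ (fun y => g y v w) x u + fderiv ℝ (fun y => g y u w) x v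
          - fderiv ℝ (fun y => g y u v) x w)
    -- the vector field `Z` solving Eq. (2)
    (Z : E n → E n)
    (hZ : ∀ x ∈ U, Z x = (g x (G x) (G x))⁻¹ •
      (fderiv ℝ G x (G x) + Γg x (G x) (G x) - lam x • G x))
    -- the Christoffel form `Γ̃` of the straightening connection, Eq. (3)
    (Γt : E n → E n → E n → E n)
    (hΓt : ∀ x ∈ U, ∀ u v : E n, Γt x u v = Γg x u v - g x u v • Z x) :
    -- (i) `Γ̃` is symmetric
    (∀ x ∈ U, ∀ u v : E n, Γt x u v = Γt x v u) ∧
    -- (ii) `Γ̃` straightens `f` with factor `λ`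
    (∀ x ∈ U, fderiv ℝ G x (G x) + Γt x (G x) (G x) = lam x • G x) ∧
    -- (iii) every gradient curve of `f` is a pregeodesic of `Γ̃`
    (∀ γ : ℝ → E n, ContDiff ℝ 1 γ → (∀ t : ℝ, γ t ∈ U) →
      (∀ t : ℝ, deriv γ t = G (γ t)) →
      ∀ t : ℝ, deriv (deriv γ) t + Γt (γ t) (deriv γ t) (deriv γ t)
        = lam (γ t) • deriv γ t) := by
  have straightens : ∀ x ∈ U, fderiv ℝ G x (G x) + Γt x (G x) (G x) = lam x • G x := by
    intro x hx
    have hgGG : g x (G x) (G x) ≠ 0 := (hg_pos x hx _ (hG_ne x hx)).ne'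
    rw [hΓt x hx, hZ x hx, smul_smul, mul_inv_cancel₀ hgGG, one_smul]
    abel
  refine ⟨fun x hx u v => ?_, straightens, fun γ hγ hγU hγG t => ?_⟩
  · have hΓg_symm := christoffel_symm_of_koszul (Γ := fun u v => Γg x u v)
      (Filter.eventually_of_mem (hU.mem_nhds hx) hg_symm) (hg_pos x hx) (hΓg x hx) u v
    rw [hΓt x hx, hΓt x hx, hg_symm x hx u v, hΓg_symm]
  · have hGd : DifferentiableAt ℝ G (γ t) :=
      (hG_smooth.contDiffAt (hU.mem_nhds (hγU t))).differentiableAt (by simp)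
    rw [deriv_deriv_of_deriv_eq_comp (hγ.differentiable one_ne_zero) hγG hGd, hγG t]
    exact straightens _ (hγU t)

/-- **Theorem 1 (existence of a straightening connection).**
Given a smooth Riemannian metric `g` on an open set `U`, a smooth function `f` with nonvanishing
`g`-gradient `G` on `U`, and a smooth function `λ`, the connection
`Γ̃ x u v = Γ^g x u v − g x u v • Z x`, with `Z` as in Eq. (2) of the paper, is symmetric,
straightens `f` with factor `λ`, and hence every gradient curve of `f` is a pregeodesic of `Γ̃`. -/
theorem straightening_connection_exists
    (n : ℕ) (hn : 1 ≤ n)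
    (U : Set (E n)) (hU : IsOpen U)
    -- a smooth Riemannian metric on `U`
    (g : E n → E n →L[ℝ] E n →L[ℝ] ℝ)
    (hg_smooth : ContDiffOn ℝ (⊤ : ℕ∞) g U)
    (hg_symm : ∀ x ∈ U, ∀ u v : E n, g x u v = g x v u)
    (hg_pos : ∀ x ∈ U, ∀ v : E n, v ≠ 0 → 0 < g x v v)
    -- a smooth function `f` with `g`-gradient `G`, nonvanishing on `U`
    (f : E n → ℝ) (hf : ContDiff ℝ (⊤ : ℕ∞) f)
    (G : E n → E n) (hG_smooth : ContDiffOn ℝ (⊤ : ℕ∞) G U)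
    (hG : ∀ x ∈ U, ∀ v : E n, g x (G x) v = fderiv ℝ f x v)
    (hG_ne : ∀ x ∈ U, G x ≠ 0)
    -- a smooth factor `λ`
    (lam : E n → ℝ) (hlam : ContDiffOn ℝ (⊤ : ℕ∞) lam U)
    -- the Levi-Civita Christoffel form of `g`
    (Γg : E n → E n →L[ℝ] E n →L[ℝ] E n)
    (hΓg : ∀ x ∈ U, ∀ u v w : E n,
      2 * g x (Γg x u v) w
        = fderiv ℝ (fun y => g y v w) x u + fderiv ℝ (fun y => g y u w) x v
          - fderiv ℝ (fun y => g y u v) x w)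
    -- the vector field `Z` solving Eq. (2)
    (Z : E n → E n)
    (hZ : ∀ x ∈ U, Z x = (g x (G x) (G x))⁻¹ •
      (fderiv ℝ G x (G x) + Γg x (G x) (G x) - lam x • G x))
    -- the Christoffel form `Γ̃` of the straightening connection, Eq. (3)
    (Γt : E n → E n → E n → E n)
    (hΓt : ∀ x ∈ U, ∀ u v : E n, Γt x u v = Γg x u v - g x u v • Z x) :
    -- (i) `Γ̃` is symmetric
    (∀ x ∈ U, ∀ u v : E n, Γt x u v = Γt x v u) ∧
    -- (ii) `Γ̃` straightens `f` with factor `λ`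
    (∀ x ∈ U, fderiv ℝ G x (G x) + Γt x (G x) (G x) = lam x • G x) ∧
    -- (iii) every gradient curve of `f` is a pregeodesic of `Γ̃`
    (∀ γ : ℝ → E n, ContDiff ℝ 1 γ → (∀ t : ℝ, γ t ∈ U) →
      (∀ t : ℝ, deriv γ t = G (γ t)) →
      ∀ t : ℝ, deriv (deriv γ) t + Γt (γ t) (deriv γ t) (deriv γ t)
        = lam (γ t) • deriv γ t) :=
  straightening_connection_exists_general n U hU g hg_symm hg_pos G hG_smooth hG_ne lam Γg hΓg Z hZ
    Γt hΓt

end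
end

section
/- Let g be a smooth Riemannian metric on an open set U ⊆ E, let f : E → ℝ be smooth with g-gradient G, let λ ∈ ℝ be a constant, and let Γ be a connection on U that straightens f with constant factor λ, with non-metricity tensor C. Let γ₁, γ₂ : ℝ → U be two gradient descent curves of f such that f (γ₁ 0) = f (γ₂ 0), and such that f ∘ γ₁ and f ∘ γ₂ both tend to the same limit m as t → ∞. Assume that for every t > 0 at which the descent speeds agree, i.e. g (γ₁ t) (deriv γ₁ t) (deriv γ₁ t) = g (γ₂ t) (deriv γ₂ t) (deriv γ₂ t), one has the strict inequality C (γ₁ t) (deriv γ₁ t) (deriv γ₁ t) (deriv γ₁ t) < C (γ₂ t) (deriv γ₂ t) (deriv γ₂ t) (deriv γ₂ t). Then f (γ₁ t) ≤ f (γ₂ t) for all t ≥ 0, i.e. γ₁ is faster than γ₂. -/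
/-!
Put `ψ = f ∘ γ₂ - f ∘ γ₁` and let `σᵢ = g(G, G)` along `γᵢ` be the squared descent speed, so
that `ψ' = σ₁ - σ₂`. Since `ψ` vanishes at `0` and at infinity, a negative value of `ψ` would
produce a minimum of `ψ` on `[0, ∞)` at some `t > 0`, where the two speeds agree. Along a
gradient descent curve the straightening equation gives `σ' = C(γ', γ', γ') - 2λσ`, so
`ψ''(t) = C₁ - C₂ < 0`, which is impossible at a minimum.
-/

open scoped Topology

noncomputable section

open Filter Set

theorem exists_gt_isMinOn_Ici_of_tendsto {ψ : ℝ → ℝ} {a t : ℝ} (hψ : ContinuousOn ψ (Ici a))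
    (hlim : Tendsto ψ atTop (𝓝 (ψ a))) (ht : a ≤ t) (hlt : ψ t < ψ a) :
    ∃ s, a < s ∧ IsMinOn ψ (Ici a) s := by
  have hfar : ∀ᶠ x in cocompact ℝ ⊓ 𝓟 (Ici a), ψ t ≤ ψ x := by
    rw [cocompact_eq_atBot_atTop, inf_sup_right, eventually_sup]
    constructor
    · filter_upwards [inter_mem_inf (Iio_mem_atBot a) (mem_principal_self (Ici a))]
        with x ⟨hxa, hax⟩
      exact absurd (mem_Ici.mp hax) (not_le.mpr hxa)
    · exact (hlim.eventually (eventually_gt_nhds hlt)).filter_mono inf_le_left |>.mono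
        fun _ h => h.le
  obtain ⟨s, hs, hmin⟩ := hψ.exists_isMinOn' isClosed_Ici ht hfar
  refine ⟨s, lt_of_le_of_ne hs ?_, hmin⟩
  rintro rfl
  exact (hmin ht).not_gt hlt

theorem IsLocalMin.nonneg_of_hasDerivAt_of_hasDerivAt {ψ φ : ℝ → ℝ} {x₀ L : ℝ}
    (hmin : IsLocalMin ψ x₀) (hψ : ∀ᶠ x in 𝓝 x₀, HasDerivAt ψ (φ x) x)
    (hφ : HasDerivAt φ L x₀) : 0 ≤ L := by
  by_contra! hL
  have hderiv : deriv ψ =ᶠ[𝓝 x₀] φ := hψ.mono fun x hx => hx.deriv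
  have hcrit : deriv ψ x₀ = 0 := hmin.deriv_eq_zero
  have hmax : IsLocalMax ψ x₀ :=
    isLocalMax_of_deriv_deriv_neg (by rwa [hderiv.deriv_eq, hφ.deriv]) hcrit
      hψ.self_of_nhds.continuousAt
  have hconst : ψ =ᶠ[𝓝 x₀] fun _ => ψ x₀ := by
    filter_upwards [hmin, hmax] with x h₁ h₂ using le_antisymm h₂ h₁
  have hφ_zero : φ =ᶠ[𝓝 x₀] fun _ => 0 :=
    hderiv.symm.trans (hconst.deriv.trans (Eventually.of_forall fun _ => deriv_const _ _))
  have := hφ.deriv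
  rw [hφ_zero.deriv_eq, deriv_const] at this
  exact hL.ne this.symm

theorem fderiv_clm_apply_apply_const {𝕜 X F₁ F₂ H : Type*} [NontriviallyNormedField 𝕜]
    [NormedAddCommGroup X] [NormedSpace 𝕜 X] [NormedAddCommGroup F₁] [NormedSpace 𝕜 F₁]
    [NormedAddCommGroup F₂] [NormedSpace 𝕜 F₂] [NormedAddCommGroup H] [NormedSpace 𝕜 H]
    {c : X → F₁ →L[𝕜] F₂ →L[𝕜] H} {x : X} (hc : DifferentiableAt 𝕜 c x) (u : F₁) (v : F₂)
    (w : X) : fderiv 𝕜 (fun y => c y u v) x w = fderiv 𝕜 c x w u v := by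
  rw [fderiv_clm_apply (hc.clm_apply (differentiableAt_const u)) (differentiableAt_const v),
    fderiv_clm_apply hc (differentiableAt_const u)]
  simp

section

variable {F : Type*} [NormedAddCommGroup F] [NormedSpace ℝ F]

theorem hasDerivAt_clm_apply_apply_comp {g : F → F →L[ℝ] F →L[ℝ] ℝ}
    {g' : F →L[ℝ] F →L[ℝ] F →L[ℝ] ℝ} {V : F → F} {V' : F →L[ℝ] F} {γ : ℝ → F} {v : F} {t : ℝ}
    (hg : HasFDerivAt g g' (γ t)) (hV : HasFDerivAt V V' (γ t)) (hγ : HasDerivAt γ v t) :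
    HasDerivAt (fun s => g (γ s) (V (γ s)) (V (γ s)))
      (g' v (V (γ t)) (V (γ t)) + g (γ t) (V' v) (V (γ t)) + g (γ t) (V (γ t)) (V' v)) t := by
  refine (((hg.clm_apply hV).clm_apply hV).comp_hasDerivAt t hγ).congr_deriv ?_
  simp only [add_apply, ContinuousLinearMap.comp_apply, ContinuousLinearMap.flip_apply]
  ring

theorem hasDerivAt_comp_of_hasDerivAt_neg_gradient {g : F → F →L[ℝ] F →L[ℝ] ℝ} {f : F → ℝ}
    {G : F → F} {γ : ℝ → F} {t : ℝ} (hf : DifferentiableAt ℝ f (γ t))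
    (hG : ∀ v, g (γ t) (G (γ t)) v = fderiv ℝ f (γ t) v) (hγ : HasDerivAt γ (-G (γ t)) t) :
    HasDerivAt (fun s => f (γ s)) (-g (γ t) (G (γ t)) (G (γ t))) t :=
  (hf.hasFDerivAt.comp_hasDerivAt t hγ).congr_deriv (by rw [map_neg, hG])

theorem hasDerivAt_apply_gradient_gradient_of_straightens {g : F → F →L[ℝ] F →L[ℝ] ℝ}
    {G : F → F} {Γ : F → F →L[ℝ] F →L[ℝ] F} {C : F → F → F → F → ℝ} {lam : ℝ}
    {γ : ℝ → F} {t : ℝ} (hg : DifferentiableAt ℝ g (γ t)) (hG : DifferentiableAt ℝ G (γ t))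
    (hsymm : ∀ u v, g (γ t) u v = g (γ t) v u)
    (hstr : fderiv ℝ G (γ t) (G (γ t)) + Γ (γ t) (G (γ t)) (G (γ t)) = lam • G (γ t))
    (hC : ∀ w u v, C (γ t) w u v = fderiv ℝ (fun y => g y u v) (γ t) w
      - g (γ t) (Γ (γ t) w u) v - g (γ t) u (Γ (γ t) w v))
    (hγ : HasDerivAt γ (-G (γ t)) t) :
    HasDerivAt (fun s => g (γ s) (G (γ s)) (G (γ s)))
      (C (γ t) (-G (γ t)) (-G (γ t)) (-G (γ t)) - 2 * lam * g (γ t) (G (γ t)) (G (γ t))) t := by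
  refine (hasDerivAt_clm_apply_apply_comp hg.hasFDerivAt hG.hasFDerivAt hγ).congr_deriv ?_
  have hDG : fderiv ℝ G (γ t) (G (γ t)) = lam • G (γ t) - Γ (γ t) (G (γ t)) (G (γ t)) :=
    eq_sub_of_add_eq hstr
  rw [hC, fderiv_clm_apply_apply_const hg, hsymm (fderiv ℝ G (γ t) _)]
  simp only [map_neg, hDG, map_sub, map_smul, neg_apply, smul_eq_mul]
  rw [hsymm (Γ (γ t) _ _)]
  ring

end

theorem asymmetry_criterion_general
    (n : ℕ)
    (U : Set (E n)) (hU : IsOpen U)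
    -- a smooth Riemannian metric on `U`
    (g : E n → E n →L[ℝ] E n →L[ℝ] ℝ)
    (hg_smooth : ContDiffOn ℝ (⊤ : ℕ∞) g U)
    (hg_symm : ∀ x ∈ U, ∀ u v : E n, g x u v = g x v u)
    -- a smooth function `f` with `g`-gradient `G`
    (f : E n → ℝ) (hf : ContDiff ℝ (⊤ : ℕ∞) f)
    (G : E n → E n) (hG_smooth : ContDiffOn ℝ (⊤ : ℕ∞) G U)
    (hG : ∀ x ∈ U, ∀ v : E n, g x (G x) v = fderiv ℝ f x v)
    -- a constant factor `λ`
    (lam : ℝ)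
    -- a connection `Γ` on `U` straightening `f` with factor `λ`
    (Γ : E n → E n →L[ℝ] E n →L[ℝ] E n)
    (hstr : ∀ x ∈ U, fderiv ℝ G x (G x) + Γ x (G x) (G x) = lam • G x)
    -- the non-metricity tensor `C` of `Γ` relative to `g`
    (C : E n → E n → E n → E n → ℝ)
    (hC : ∀ x ∈ U, ∀ w u v : E n,
      C x w u v = fderiv ℝ (fun y => g y u v) x w - g x (Γ x w u) v - g x u (Γ x w v))
    -- two gradient descent curves of `f`
    (γ₁ γ₂ : ℝ → E n)
    (hγ₁U : ∀ t : ℝ, γ₁ t ∈ U) (hγ₂U : ∀ t : ℝ, γ₂ t ∈ U)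
    (hγ₁C1 : ContDiff ℝ 1 γ₁) (hγ₂C1 : ContDiff ℝ 1 γ₂)
    (hγ₁ : ∀ t : ℝ, 0 ≤ t → deriv γ₁ t = -G (γ₁ t))
    (hγ₂ : ∀ t : ℝ, 0 ≤ t → deriv γ₂ t = -G (γ₂ t))
    -- `f`-equidistant initial conditions
    (heq : f (γ₁ 0) = f (γ₂ 0))
    -- both relaxations tend to the same limit `m`
    (m : ℝ)
    (hlim₁ : Filter.Tendsto (fun t => f (γ₁ t)) Filter.atTop (nhds m))
    (hlim₂ : Filter.Tendsto (fun t => f (γ₂ t)) Filter.atTop (nhds m))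
    -- comparison of the non-metricity tensor at equal descent speeds
    (hcrit : ∀ t : ℝ, 0 < t →
      g (γ₁ t) (deriv γ₁ t) (deriv γ₁ t) = g (γ₂ t) (deriv γ₂ t) (deriv γ₂ t) →
      C (γ₁ t) (deriv γ₁ t) (deriv γ₁ t) (deriv γ₁ t)
        < C (γ₂ t) (deriv γ₂ t) (deriv γ₂ t) (deriv γ₂ t)) :
    -- `γ₁` is faster than `γ₂`
    ∀ t : ℝ, 0 ≤ t → f (γ₁ t) ≤ f (γ₂ t) := by
  intro t ht
  by_contra! hlt
  have hgd : ∀ x ∈ U, DifferentiableAt ℝ g x := fun x hx =>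
    (hg_smooth.contDiffAt (hU.mem_nhds hx)).differentiableAt (by simp)
  have hGd : ∀ x ∈ U, DifferentiableAt ℝ G x := fun x hx =>
    (hG_smooth.contDiffAt (hU.mem_nhds hx)).differentiableAt (by simp)
  have hγ₁' : ∀ s, 0 ≤ s → HasDerivAt γ₁ (-G (γ₁ s)) s := fun s hs =>
    hγ₁ s hs ▸ (hγ₁C1.differentiable one_ne_zero s).hasDerivAt
  have hγ₂' : ∀ s, 0 ≤ s → HasDerivAt γ₂ (-G (γ₂ s)) s := fun s hs =>
    hγ₂ s hs ▸ (hγ₂C1.differentiable one_ne_zero s).hasDerivAt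
  set ψ : ℝ → ℝ := fun s => f (γ₂ s) - f (γ₁ s)
  set σ₁ : ℝ → ℝ := fun s => g (γ₁ s) (G (γ₁ s)) (G (γ₁ s))
  set σ₂ : ℝ → ℝ := fun s => g (γ₂ s) (G (γ₂ s)) (G (γ₂ s))
  have hψ' : ∀ s, 0 ≤ s → HasDerivAt ψ (σ₁ s - σ₂ s) s := fun s hs =>
    ((hasDerivAt_comp_of_hasDerivAt_neg_gradient (hf.differentiable (by simp) _)
      (hG _ (hγ₂U s)) (hγ₂' s hs)).sub
    (hasDerivAt_comp_of_hasDerivAt_neg_gradient (hf.differentiable (by simp) _)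
      (hG _ (hγ₁U s)) (hγ₁' s hs))).congr_deriv (neg_sub_neg _ _)
  obtain ⟨tm, htm, hmin⟩ : ∃ tm, 0 < tm ∧ IsMinOn ψ (Ici 0) tm :=
    exists_gt_isMinOn_Ici_of_tendsto (fun s hs => (hψ' s hs).continuousAt.continuousWithinAt)
      (by simpa [ψ, heq] using hlim₂.sub hlim₁) ht (by simp only [ψ, heq]; linarith)
  have hloc : IsLocalMin ψ tm := hmin.isLocalMin (Ici_mem_nhds htm)
  have hspeed : σ₁ tm = σ₂ tm := sub_eq_zero.mp (hloc.hasDerivAt_eq_zero (hψ' tm htm.le))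
  have hσ₁' := hasDerivAt_apply_gradient_gradient_of_straightens (hgd _ (hγ₁U tm))
    (hGd _ (hγ₁U tm)) (hg_symm _ (hγ₁U tm)) (hstr _ (hγ₁U tm)) (hC _ (hγ₁U tm)) (hγ₁' tm htm.le)
  have hσ₂' := hasDerivAt_apply_gradient_gradient_of_straightens (hgd _ (hγ₂U tm))
    (hGd _ (hγ₂U tm)) (hg_symm _ (hγ₂U tm)) (hstr _ (hγ₂U tm)) (hC _ (hγ₂U tm)) (hγ₂' tm htm.le)
  have hC_lt := hcrit tm htm (by simpa [hγ₁ tm htm.le, hγ₂ tm htm.le] using hspeed)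
  rw [hγ₁ tm htm.le, hγ₂ tm htm.le] at hC_lt
  have hnonneg := hloc.nonneg_of_hasDerivAt_of_hasDerivAt
    (eventually_of_mem (Ioi_mem_nhds htm) fun s hs => hψ' s (le_of_lt hs)) (hσ₁'.sub hσ₂')
  have hlam : lam * σ₁ tm = lam * σ₂ tm := by rw [hspeed]
  linarith

/-- **Theorem 2 (asymmetry criterion on Riemannian manifolds).**
Let `Γ` be a connection straightening `f` with constant factor `λ`, with non-metricity tensor `C`.
If `γ₁, γ₂` are gradient descent curves of `f` with `f`-equidistant initial conditions, tending to
a common limit at infinity, and whenever the descent speeds coincide (for `t > 0`) the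
non-metricity component along `γ₁` is strictly smaller than along `γ₂`, then `γ₁` is faster
than `γ₂`, i.e. `f (γ₁ t) ≤ f (γ₂ t)` for all `t ≥ 0`. -/
theorem asymmetry_criterion
    (n : ℕ) (hn : 1 ≤ n)
    (U : Set (E n)) (hU : IsOpen U)
    -- a smooth Riemannian metric on `U`
    (g : E n → E n →L[ℝ] E n →L[ℝ] ℝ)
    (hg_smooth : ContDiffOn ℝ (⊤ : ℕ∞) g U)
    (hg_symm : ∀ x ∈ U, ∀ u v : E n, g x u v = g x v u)
    (hg_pos : ∀ x ∈ U, ∀ v : E n, v ≠ 0 → 0 < g x v v)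
    -- a smooth function `f` with `g`-gradient `G`
    (f : E n → ℝ) (hf : ContDiff ℝ (⊤ : ℕ∞) f)
    (G : E n → E n) (hG_smooth : ContDiffOn ℝ (⊤ : ℕ∞) G U)
    (hG : ∀ x ∈ U, ∀ v : E n, g x (G x) v = fderiv ℝ f x v)
    -- a constant factor `λ`
    (lam : ℝ)
    -- a connection `Γ` on `U` straightening `f` with factor `λ`
    (Γ : E n → E n →L[ℝ] E n →L[ℝ] E n)
    (hΓ_smooth : ContDiffOn ℝ (⊤ : ℕ∞) Γ U)
    (hstr : ∀ x ∈ U, fderiv ℝ G x (G x) + Γ x (G x) (G x) = lam • G x)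
    -- the non-metricity tensor `C` of `Γ` relative to `g`
    (C : E n → E n → E n → E n → ℝ)
    (hC : ∀ x ∈ U, ∀ w u v : E n,
      C x w u v = fderiv ℝ (fun y => g y u v) x w - g x (Γ x w u) v - g x u (Γ x w v))
    -- two gradient descent curves of `f`
    (γ₁ γ₂ : ℝ → E n)
    (hγ₁U : ∀ t : ℝ, γ₁ t ∈ U) (hγ₂U : ∀ t : ℝ, γ₂ t ∈ U)
    (hγ₁C1 : ContDiff ℝ 1 γ₁) (hγ₂C1 : ContDiff ℝ 1 γ₂)
    (hγ₁ : ∀ t : ℝ, 0 ≤ t → deriv γ₁ t = -G (γ₁ t))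
    (hγ₂ : ∀ t : ℝ, 0 ≤ t → deriv γ₂ t = -G (γ₂ t))
    -- `f`-equidistant initial conditions
    (heq : f (γ₁ 0) = f (γ₂ 0))
    -- both relaxations tend to the same limit `m`
    (m : ℝ)
    (hlim₁ : Filter.Tendsto (fun t => f (γ₁ t)) Filter.atTop (nhds m))
    (hlim₂ : Filter.Tendsto (fun t => f (γ₂ t)) Filter.atTop (nhds m))
    -- comparison of the non-metricity tensor at equal descent speeds
    (hcrit : ∀ t : ℝ, 0 < t →
      g (γ₁ t) (deriv γ₁ t) (deriv γ₁ t) = g (γ₂ t) (deriv γ₂ t) (deriv γ₂ t) →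
      C (γ₁ t) (deriv γ₁ t) (deriv γ₁ t) (deriv γ₁ t)
        < C (γ₂ t) (deriv γ₂ t) (deriv γ₂ t) (deriv γ₂ t)) :
    -- `γ₁` is faster than `γ₂`
    ∀ t : ℝ, 0 ≤ t → f (γ₁ t) ≤ f (γ₂ t) :=
  asymmetry_criterion_general n U hU g hg_smooth hg_symm f hf G hG_smooth hG lam Γ hstr C hC γ₁ γ₂
    hγ₁U hγ₂U hγ₁C1 hγ₂C1 hγ₁ hγ₂ heq m hlim₁ hlim₂ hcrit

end
end

section
/- Let g be a smooth Riemannian metric on an open set U ⊆ E, let f : E → ℝ be smooth with g-gradient G, let λ > 0 be a constant, and let Γ be a connection on U that straightens f with constant factor λ and whose non-metricity tensor C vanishes identically (i.e. Γ is a metric connection). Then: (i) every gradient descent curve γ of f with f (γ t) → 0 as t → ∞ satisfies f (γ t) = f (γ 0) * Real.exp (−2*λ*t) for all t ≥ 0; and (ii) consequently, for any two gradient descent curves γ₁, γ₂ with f (γ₁ 0) = f (γ₂ 0) and f ∘ γ₁, f ∘ γ₂ → 0 at infinity, one has f (γ₁ t) = f (γ₂ t) for all t ≥ 0, so no relaxation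 asymmetry can occur. -/
/-!
Along a gradient descent curve `γ`, the functions `φ = f ∘ γ` and `ψ = g (G, G) ∘ γ` satisfy
`φ' = -ψ` and `ψ' = -2 g (∇_G G, G) = -2λψ`: the first equality is metric compatibility together
with symmetry of `g`, the second is straightening. Hence `ψ` decays like `exp (-2λt)` and
`2λφ - ψ` is constant; since both `φ` and `ψ` tend to `0`, so does this constant, and `φ' = -2λφ`.
-/

open scoped Topology

noncomputable section

open Filter

theorem eq_apply_zero_of_hasDerivAt_zero {F : Type*} [NormedAddCommGroup F] [NormedSpace ℝ F]
    {u : ℝ → F} (hu : ∀ t, 0 ≤ t → HasDerivAt u 0 t) {t : ℝ} (ht : 0 ≤ t) : u t = u 0 :=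
  constant_of_has_deriv_right_zero
    (fun s hs => (hu s hs.1).continuousAt.continuousWithinAt)
    (fun s hs => (hu s hs.1).hasDerivWithinAt) t ⟨ht, le_rfl⟩

theorem eq_mul_exp_of_hasDerivAt_mul {u : ℝ → ℝ} {c : ℝ}
    (hu : ∀ t, 0 ≤ t → HasDerivAt u (c * u t) t) {t : ℝ} (ht : 0 ≤ t) :
    u t = u 0 * Real.exp (c * t) := by
  have hconst : ∀ s, 0 ≤ s → HasDerivAt (fun r => u r * Real.exp (-(c * r))) 0 s := by
    intro s hs
    have hexp : HasDerivAt (fun r => Real.exp (-(c * r))) (Real.exp (-(c * s)) * -c) s := by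
      simpa using ((hasDerivAt_id s).const_mul c).neg.exp
    exact ((hu s hs).mul hexp).congr_deriv (by ring)
  have := eq_apply_zero_of_hasDerivAt_zero hconst ht
  simp only [mul_zero, neg_zero, Real.exp_zero, mul_one] at this
  rw [← this, mul_assoc, ← Real.exp_add, neg_add_cancel, Real.exp_zero, mul_one]

theorem eq_mul_exp_of_hasDerivAt_of_tendsto_zero {φ ψ : ℝ → ℝ} {c : ℝ} (hc : 0 < c)
    (hφ : ∀ t, 0 ≤ t → HasDerivAt φ (-ψ t) t) (hψ : ∀ t, 0 ≤ t → HasDerivAt ψ (-c * ψ t) t)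
    (hφ_lim : Tendsto φ atTop (𝓝 0)) {t : ℝ} (ht : 0 ≤ t) :
    φ t = φ 0 * Real.exp (-c * t) := by
  have hψ_lim : Tendsto ψ atTop (𝓝 0) := by
    have hexp : Tendsto (fun s => Real.exp (-c * s)) atTop (𝓝 0) := by
      have hlin : Tendsto (fun s => c * s) atTop atTop := tendsto_id.const_mul_atTop hc
      simpa [Function.comp_def] using Real.tendsto_exp_neg_atTop_nhds_zero.comp hlin
    have hexp' : Tendsto (fun s => ψ 0 * Real.exp (-c * s)) atTop (𝓝 0) := by
      simpa using hexp.const_mul (ψ 0)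
    refine hexp'.congr' ?_
    filter_upwards [eventually_ge_atTop 0] with s hs
    exact (eq_mul_exp_of_hasDerivAt_mul hψ hs).symm
  have hconst : ∀ s, 0 ≤ s → HasDerivAt (fun r => c * φ r - ψ r) 0 s := fun s hs =>
    (((hφ s hs).const_mul c).sub (hψ s hs)).congr_deriv (by ring)
  have hψ_eq : ∀ s, 0 ≤ s → ψ s = c * φ s := by
    have hlim : Tendsto (fun r => c * φ r - ψ r) atTop (𝓝 0) := by
      simpa using (hφ_lim.const_mul c).sub hψ_lim
    have hzero : c * φ 0 - ψ 0 = 0 := by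
      refine tendsto_nhds_unique (tendsto_const_nhds.congr' ?_) hlim
      filter_upwards [eventually_ge_atTop 0] with s hs
      exact (eq_apply_zero_of_hasDerivAt_zero hconst hs).symm
    intro s hs
    linarith [eq_apply_zero_of_hasDerivAt_zero hconst hs]
  refine eq_mul_exp_of_hasDerivAt_mul (fun s hs => ?_) ht
  simpa [hψ_eq s hs] using hφ s hs

section GradientFlow

variable {F : Type*} [NormedAddCommGroup F] [NormedSpace ℝ F]

theorem fderiv_apply_apply_of_differentiableAt {g : F → F →L[ℝ] F →L[ℝ] ℝ} {x : F}
    (hg : DifferentiableAt ℝ g x) (u v w : F) :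
    fderiv ℝ (fun y => g y u v) x w = fderiv ℝ g x w u v := by
  rw [((hg.hasFDerivAt.clm_apply (hasFDerivAt_const u x)).clm_apply
    (hasFDerivAt_const v x)).fderiv]
  simp

theorem hasDerivAt_metric_apply_gradient_of_straightening {g : F → F →L[ℝ] F →L[ℝ] ℝ}
    {G : F → F} {Γ : F →L[ℝ] F →L[ℝ] F} {lam : ℝ} {γ : ℝ → F} {t : ℝ}
    (hγ : HasDerivAt γ (-G (γ t)) t) (hg : DifferentiableAt ℝ g (γ t))
    (hG : DifferentiableAt ℝ G (γ t)) (hsymm : ∀ u v, g (γ t) u v = g (γ t) v u)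
    (hcompat : ∀ u v, fderiv ℝ (fun y => g y u v) (γ t) (G (γ t))
      = g (γ t) (Γ (G (γ t)) u) v + g (γ t) u (Γ (G (γ t)) v))
    (hstr : fderiv ℝ G (γ t) (G (γ t)) + Γ (G (γ t)) (G (γ t)) = lam • G (γ t)) :
    HasDerivAt (fun s => g (γ s) (G (γ s)) (G (γ s)))
      (-(2 * lam * g (γ t) (G (γ t)) (G (γ t)))) t := by
  have hM := HasFDerivAt.comp_hasDerivAt (l := g) t hg.hasFDerivAt hγ
  have hV := HasFDerivAt.comp_hasDerivAt (l := G) t hG.hasFDerivAt hγ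
  set x := γ t
  refine ((hM.clm_apply hV).clm_apply hV).congr_deriv ?_
  have hΓ := hcompat (G x) (G x)
  rw [fderiv_apply_apply_of_differentiableAt hg] at hΓ
  have hgG : g x (fderiv ℝ G x (G x) + Γ (G x) (G x)) (G x) = lam * g x (G x) (G x) := by
    rw [hstr]
    simp
  simp only [map_add, map_neg, add_apply, neg_apply, Function.comp_apply] at hgG ⊢
  linarith [hsymm (G x) (fderiv ℝ G x (G x)), hsymm (G x) (Γ (G x) (G x))]

theorem apply_eq_mul_exp_of_metric_straightening {U : Set F} {g : F → F →L[ℝ] F →L[ℝ] ℝ}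
    (hg : ∀ x ∈ U, DifferentiableAt ℝ g x) (hg_symm : ∀ x ∈ U, ∀ u v, g x u v = g x v u)
    {f : F → ℝ} (hf : Differentiable ℝ f) {G : F → F} (hG_diff : ∀ x ∈ U, DifferentiableAt ℝ G x)
    (hG : ∀ x ∈ U, ∀ v, g x (G x) v = fderiv ℝ f x v) {lam : ℝ} (hlam : 0 < lam)
    {Γ : F → F →L[ℝ] F →L[ℝ] F}
    (hstr : ∀ x ∈ U, fderiv ℝ G x (G x) + Γ x (G x) (G x) = lam • G x)
    (hcompat : ∀ x ∈ U, ∀ w u v,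
      fderiv ℝ (fun y => g y u v) x w = g x (Γ x w u) v + g x u (Γ x w v))
    {γ : ℝ → F} (hγU : ∀ t, γ t ∈ U) (hγ : ∀ t, 0 ≤ t → HasDerivAt γ (-G (γ t)) t)
    (hγ_lim : Tendsto (fun t => f (γ t)) atTop (𝓝 0)) {t : ℝ} (ht : 0 ≤ t) :
    f (γ t) = f (γ 0) * Real.exp (-(2 * lam) * t) := by
  have hf_deriv : ∀ s, 0 ≤ s →
      HasDerivAt (fun r => f (γ r)) (-g (γ s) (G (γ s)) (G (γ s))) s := fun s hs => by
    have := (hf (γ s)).hasFDerivAt.comp_hasDerivAt s (hγ s hs)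
    rwa [map_neg, ← hG (γ s) (hγU s)] at this
  have hgG_deriv : ∀ s, 0 ≤ s → HasDerivAt (fun r => g (γ r) (G (γ r)) (G (γ r)))
      (-(2 * lam) * g (γ s) (G (γ s)) (G (γ s))) s := fun s hs => by
    rw [neg_mul]
    exact hasDerivAt_metric_apply_gradient_of_straightening (hγ s hs) (hg _ (hγU s))
      (hG_diff _ (hγU s)) (hg_symm _ (hγU s)) (hcompat _ (hγU s) _) (hstr _ (hγU s))
  exact eq_mul_exp_of_hasDerivAt_of_tendsto_zero (by positivity) hf_deriv hgG_deriv hγ_lim ht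

end GradientFlow

theorem no_asymmetry_of_metric_straightening_general
    (n : ℕ)
    (U : Set (E n)) (hU : IsOpen U)
    -- a smooth Riemannian metric on `U`
    (g : E n → E n →L[ℝ] E n →L[ℝ] ℝ)
    (hg_smooth : ContDiffOn ℝ (⊤ : ℕ∞) g U)
    (hg_symm : ∀ x ∈ U, ∀ u v : E n, g x u v = g x v u)
    -- a smooth function `f` with `g`-gradient `G`
    (f : E n → ℝ) (hf : ContDiff ℝ (⊤ : ℕ∞) f)
    (G : E n → E n) (hG_smooth : ContDiffOn ℝ (⊤ : ℕ∞) G U)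
    (hG : ∀ x ∈ U, ∀ v : E n, g x (G x) v = fderiv ℝ f x v)
    -- a constant factor `λ > 0`
    (lam : ℝ) (hlam : 0 < lam)
    -- a connection `Γ` on `U` straightening `f` with factor `λ`
    (Γ : E n → E n →L[ℝ] E n →L[ℝ] E n)
    (hstr : ∀ x ∈ U, fderiv ℝ G x (G x) + Γ x (G x) (G x) = lam • G x)
    -- the non-metricity tensor `C` of `Γ` relative to `g`, vanishing identically
    (C : E n → E n → E n → E n → ℝ)
    (hC : ∀ x ∈ U, ∀ w u v : E n,
      C x w u v = fderiv ℝ (fun y => g y u v) x w - g x (Γ x w u) v - g x u (Γ x w v))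
    (hC_zero : ∀ x ∈ U, ∀ w u v : E n, C x w u v = 0) :
    -- (i) exponential relaxation along every gradient descent curve of `f` tending to `0`
    (∀ γ : ℝ → E n, (∀ t : ℝ, γ t ∈ U) → ContDiff ℝ 1 γ →
      (∀ t : ℝ, 0 ≤ t → deriv γ t = -G (γ t)) →
      Filter.Tendsto (fun t => f (γ t)) Filter.atTop (nhds 0) →
      ∀ t : ℝ, 0 ≤ t → f (γ t) = f (γ 0) * Real.exp (-2 * lam * t)) ∧
    -- (ii) no relaxation asymmetry for `f`-equidistant gradient descent curves
    (∀ γ₁ γ₂ : ℝ → E n,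
      (∀ t : ℝ, γ₁ t ∈ U) → (∀ t : ℝ, γ₂ t ∈ U) →
      ContDiff ℝ 1 γ₁ → ContDiff ℝ 1 γ₂ →
      (∀ t : ℝ, 0 ≤ t → deriv γ₁ t = -G (γ₁ t)) →
      (∀ t : ℝ, 0 ≤ t → deriv γ₂ t = -G (γ₂ t)) →
      f (γ₁ 0) = f (γ₂ 0) →
      Filter.Tendsto (fun t => f (γ₁ t)) Filter.atTop (nhds 0) →
      Filter.Tendsto (fun t => f (γ₂ t)) Filter.atTop (nhds 0) →
      ∀ t : ℝ, 0 ≤ t → f (γ₁ t) = f (γ₂ t)) := by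
  have hg_diff : ∀ x ∈ U, DifferentiableAt ℝ g x := fun x hx =>
    (hg_smooth.contDiffAt (hU.mem_nhds hx)).differentiableAt (by simp)
  have hG_diff : ∀ x ∈ U, DifferentiableAt ℝ G x := fun x hx =>
    (hG_smooth.contDiffAt (hU.mem_nhds hx)).differentiableAt (by simp)
  have hcompat : ∀ x ∈ U, ∀ w u v : E n,
      fderiv ℝ (fun y => g y u v) x w = g x (Γ x w u) v + g x u (Γ x w v) := fun x hx w u v => by
    linarith [hC x hx w u v, hC_zero x hx w u v]
  have relax : ∀ γ : ℝ → E n, (∀ t, γ t ∈ U) → ContDiff ℝ 1 γ →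
      (∀ t, 0 ≤ t → deriv γ t = -G (γ t)) → Tendsto (fun t => f (γ t)) atTop (𝓝 0) →
      ∀ t, 0 ≤ t → f (γ t) = f (γ 0) * Real.exp (-2 * lam * t) := by
    intro γ hγU hγ_smooth hγ' hγ_lim t ht
    have hγ : ∀ s, 0 ≤ s → HasDerivAt γ (-G (γ s)) s := fun s hs =>
      hγ' s hs ▸ (hγ_smooth.differentiable one_ne_zero s).hasDerivAt
    rw [neg_mul, apply_eq_mul_exp_of_metric_straightening hg_diff hg_symm
      (hf.differentiable (by simp)) hG_diff hG hlam hstr hcompat hγU hγ hγ_lim ht]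
  refine ⟨relax, fun γ₁ γ₂ hγ₁U hγ₂U hγ₁ hγ₂ hγ₁' hγ₂' h₀ hγ₁_lim hγ₂_lim t ht => ?_⟩
  rw [relax γ₁ hγ₁U hγ₁ hγ₁' hγ₁_lim t ht, relax γ₂ hγ₂U hγ₂ hγ₂' hγ₂_lim t ht, h₀]

/-- **Corollary (no asymmetry for metric straightening connections).**
If `f` admits a straightening connection with constant factor `λ > 0` whose non-metricity tensor
vanishes identically, then (i) every gradient descent curve `γ` of `f` relaxing to `0` satisfies
`f (γ t) = f (γ 0) · exp (−2λt)` for `t ≥ 0`, and (ii) any two such curves with `f`-equidistant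
initial conditions satisfy `f (γ₁ t) = f (γ₂ t)` for all `t ≥ 0`: no asymmetry can occur. -/
theorem no_asymmetry_of_metric_straightening
    (n : ℕ) (hn : 1 ≤ n)
    (U : Set (E n)) (hU : IsOpen U)
    -- a smooth Riemannian metric on `U`
    (g : E n → E n →L[ℝ] E n →L[ℝ] ℝ)
    (hg_smooth : ContDiffOn ℝ (⊤ : ℕ∞) g U)
    (hg_symm : ∀ x ∈ U, ∀ u v : E n, g x u v = g x v u)
    (hg_pos : ∀ x ∈ U, ∀ v : E n, v ≠ 0 → 0 < g x v v)
    -- a smooth function `f` with `g`-gradient `G`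
    (f : E n → ℝ) (hf : ContDiff ℝ (⊤ : ℕ∞) f)
    (G : E n → E n) (hG_smooth : ContDiffOn ℝ (⊤ : ℕ∞) G U)
    (hG : ∀ x ∈ U, ∀ v : E n, g x (G x) v = fderiv ℝ f x v)
    -- a constant factor `λ > 0`
    (lam : ℝ) (hlam : 0 < lam)
    -- a connection `Γ` on `U` straightening `f` with factor `λ`
    (Γ : E n → E n →L[ℝ] E n →L[ℝ] E n)
    (hΓ_smooth : ContDiffOn ℝ (⊤ : ℕ∞) Γ U)
    (hstr : ∀ x ∈ U, fderiv ℝ G x (G x) + Γ x (G x) (G x) = lam • G x)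
    -- the non-metricity tensor `C` of `Γ` relative to `g`, vanishing identically
    (C : E n → E n → E n → E n → ℝ)
    (hC : ∀ x ∈ U, ∀ w u v : E n,
      C x w u v = fderiv ℝ (fun y => g y u v) x w - g x (Γ x w u) v - g x u (Γ x w v))
    (hC_zero : ∀ x ∈ U, ∀ w u v : E n, C x w u v = 0) :
    -- (i) exponential relaxation along every gradient descent curve of `f` tending to `0`
    (∀ γ : ℝ → E n, (∀ t : ℝ, γ t ∈ U) → ContDiff ℝ 1 γ →
      (∀ t : ℝ, 0 ≤ t → deriv γ t = -G (γ t)) →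
      Filter.Tendsto (fun t => f (γ t)) Filter.atTop (nhds 0) →
      ∀ t : ℝ, 0 ≤ t → f (γ t) = f (γ 0) * Real.exp (-2 * lam * t)) ∧
    -- (ii) no relaxation asymmetry for `f`-equidistant gradient descent curves
    (∀ γ₁ γ₂ : ℝ → E n,
      (∀ t : ℝ, γ₁ t ∈ U) → (∀ t : ℝ, γ₂ t ∈ U) →
      ContDiff ℝ 1 γ₁ → ContDiff ℝ 1 γ₂ →
      (∀ t : ℝ, 0 ≤ t → deriv γ₁ t = -G (γ₁ t)) →
      (∀ t : ℝ, 0 ≤ t → deriv γ₂ t = -G (γ₂ t)) →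
      f (γ₁ 0) = f (γ₂ 0) →
      Filter.Tendsto (fun t => f (γ₁ t)) Filter.atTop (nhds 0) →
      Filter.Tendsto (fun t => f (γ₂ t)) Filter.atTop (nhds 0) →
      ∀ t : ℝ, 0 ≤ t → f (γ₁ t) = f (γ₂ t)) :=
  no_asymmetry_of_metric_straightening_general n U hU g hg_smooth hg_symm f hf G hG_smooth hG lam
    hlam Γ hstr C hC hC_zero

end
end

section
/- Let g be a smooth Riemannian metric on an open set U ⊆ E, let f : E → ℝ be smooth with g-gradient G satisfying G x ≠ 0 for all x ∈ U, and let λ : U → ℝ be smooth. Let Z x := (g x (G x) (G x))⁻¹ • ((fderiv ℝ G x) (G x) + Γ^g x (G x) (G x) − λ x • G x) and Γ̃ x u v := Γ^g x u v − (g x u v) • Z x. Then the non-metricity tensor C̃ of Γ̃ relative to g satisfies, for all x ∈ U and all w, u, v ∈ E: C̃ x w u v = (g x w u) * (g x v (Z x)) + (g x w v) * (g x u (Z x)). In particular C̃ is symmetric in its last two arguments but in general not totally symmetric. -/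
open scoped Topology

noncomputable section

/-- **Non-metricity of the straightening connection `Γ̃` (Eq. (4) of the paper).**
For the connection `Γ̃ x u v = Γ^g x u v − g x u v • Z x`, the non-metricity tensor relative
to `g` is `C̃ x w u v = g x w u · g x v (Z x) + g x w v · g x u (Z x)`; in particular it is
symmetric in its last two arguments (but in general not totally symmetric). -/
theorem nonmetricity_of_straightening_connection
    (n : ℕ) (hn : 1 ≤ n)
    (U : Set (E n)) (hU : IsOpen U)
    -- a smooth Riemannian metric on `U`
    (g : E n → E n →L[ℝ] E n →L[ℝ] ℝ)
    (hg_smooth : ContDiffOn ℝ (⊤ : ℕ∞) g U)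
    (hg_symm : ∀ x ∈ U, ∀ u v : E n, g x u v = g x v u)
    (hg_pos : ∀ x ∈ U, ∀ v : E n, v ≠ 0 → 0 < g x v v)
    -- a smooth function `f` with `g`-gradient `G`, nonvanishing on `U`
    (f : E n → ℝ) (hf : ContDiff ℝ (⊤ : ℕ∞) f)
    (G : E n → E n) (hG_smooth : ContDiffOn ℝ (⊤ : ℕ∞) G U)
    (hG : ∀ x ∈ U, ∀ v : E n, g x (G x) v = fderiv ℝ f x v)
    (hG_ne : ∀ x ∈ U, G x ≠ 0)
    -- a smooth factor `λ`
    (lam : E n → ℝ) (hlam : ContDiffOn ℝ (⊤ : ℕ∞) lam U)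
    -- the Levi-Civita Christoffel form of `g`
    (Γg : E n → E n →L[ℝ] E n →L[ℝ] E n)
    (hΓg : ∀ x ∈ U, ∀ u v w : E n,
      2 * g x (Γg x u v) w
        = fderiv ℝ (fun y => g y v w) x u + fderiv ℝ (fun y => g y u w) x v
          - fderiv ℝ (fun y => g y u v) x w)
    -- the vector field `Z`
    (Z : E n → E n)
    (hZ : ∀ x ∈ U, Z x = (g x (G x) (G x))⁻¹ •
      (fderiv ℝ G x (G x) + Γg x (G x) (G x) - lam x • G x))
    -- the Christoffel form `Γ̃` of the straightening connection
    (Γt : E n → E n → E n → E n)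
    (hΓt : ∀ x ∈ U, ∀ u v : E n, Γt x u v = Γg x u v - g x u v • Z x)
    -- the non-metricity tensor `C̃` of `Γ̃` relative to `g`
    (Ct : E n → E n → E n → E n → ℝ)
    (hCt : ∀ x ∈ U, ∀ w u v : E n,
      Ct x w u v = fderiv ℝ (fun y => g y u v) x w - g x (Γt x w u) v - g x u (Γt x w v)) :
    -- Eq. (4): the explicit form of the non-metricity tensor
    (∀ x ∈ U, ∀ w u v : E n,
      Ct x w u v = g x w u * g x v (Z x) + g x w v * g x u (Z x)) ∧
    -- in particular, `C̃` is symmetric in its last two arguments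
    (∀ x ∈ U, ∀ w u v : E n, Ct x w u v = Ct x w v u) := by
  have main : ∀ x ∈ U, ∀ w u v : E n,
      Ct x w u v = g x w u * g x v (Z x) + g x w v * g x u (Z x) := by
    intro x hx w u v
    have hsym : ∀ a b : E n,
        fderiv ℝ (fun y => g y a b) x = fderiv ℝ (fun y => g y b a) x := by
      intro a b
      apply Filter.EventuallyEq.fderiv_eq
      filter_upwards [hU.mem_nhds hx] with y hy
      exact hg_symm y hy a b
    have h1 := hΓg x hx w u v
    have h2 := hΓg x hx w v u
    have hd : fderiv ℝ (fun y => g y v u) x w = fderiv ℝ (fun y => g y u v) x w := by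
      rw [hsym u v]
    rw [hCt x hx, hΓt x hx, hΓt x hx]
    have e1 : g x (Γg x w u - g x w u • Z x) v
        = g x (Γg x w u) v - g x w u * g x (Z x) v := by
      simp [map_sub, map_smul, smul_eq_mul, mul_comm]
    have e2 : g x u (Γg x w v - g x w v • Z x)
        = g x u (Γg x w v) - g x w v * g x u (Z x) := by
      simp [map_sub, map_smul, smul_eq_mul]
    rw [e1, e2]
    have hsg1 : g x u (Γg x w v) = g x (Γg x w v) u := hg_symm x hx u (Γg x w v)
    have hsg2 : g x (Z x) v = g x v (Z x) := hg_symm x hx (Z x) v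
    rw [hsg1, hsg2]
    linarith [h1, h2, hd]
  refine ⟨main, fun x hx w u v => ?_⟩
  rw [main x hx w u v, main x hx w v u]
  ring

end
end

section
/- Let g be a smooth Riemannian metric on an open set U ⊆ E, let f : E → ℝ be smooth with g-gradient G, let λ : U → ℝ be smooth, and let Γ be a connection on U that straightens f with factor λ, with non-metricity tensor C. Then along every gradient descent curve γ of f one has, for all t: deriv (deriv (f ∘ γ)) t = − C (γ t) (deriv γ t) (deriv γ t) (deriv γ t) − 2 * λ (γ t) * deriv (f ∘ γ) t. (In particular, if λ ≡ 0 then the second derivative of f along the flow equals minus the non-metricity component C(γ̇, γ̇, γ̇).) -/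
open scoped Topology

noncomputable section

/-!
Along a gradient descent curve, `(f ∘ γ)' = df(γ̇) = g(G, γ̇) = -g(γ̇, γ̇)`, and differentiating
`γ̇ = -G ∘ γ` turns the straightening condition into `γ̈ + Γ(γ̇, γ̇) = -λ γ̇`. Differentiating the
energy `g(γ̇, γ̇)` and substituting `γ̈` leaves exactly the non-metricity term `C(γ̇, γ̇, γ̇)` plus
`-2λ g(γ̇, γ̇)`.
-/

namespace GradientFlow

variable {𝕜 F H : Type*} [NontriviallyNormedField 𝕜]
  [NormedAddCommGroup F] [NormedSpace 𝕜 F] [NormedAddCommGroup H] [NormedSpace 𝕜 H]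

/-- The non-metricity `(∇_w g)(u, v)` of the connection with Christoffel form `Γ` at a point where
the metric is `g` with derivative `g'`. -/
def nonmetricity (g' : F →L[𝕜] F →L[𝕜] F →L[𝕜] 𝕜) (g : F →L[𝕜] F →L[𝕜] 𝕜)
    (Γ : F →L[𝕜] F →L[𝕜] F) (w u v : F) : 𝕜 :=
  g' w u v - g (Γ w u) v - g u (Γ w v)

theorem fderiv_apply_apply_const {B : F → F →L[𝕜] F →L[𝕜] H} {x : F}
    (hB : DifferentiableAt 𝕜 B x) (u v w : F) :
    fderiv 𝕜 (fun y => B y u v) x w = fderiv 𝕜 B x w u v := by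
  have h := (hB.hasFDerivAt.clm_apply (hasFDerivAt_const u x)).clm_apply (hasFDerivAt_const v x)
  simp [h.fderiv]

theorem hasDerivAt_comp_of_hasDerivAt_neg_gradient {f : F → 𝕜} {c : 𝕜 → F}
    {g : F →L[𝕜] F →L[𝕜] 𝕜} {v : F} {s : 𝕜} (hf : DifferentiableAt 𝕜 f (c s))
    (hgrad : ∀ w, g (-v) w = fderiv 𝕜 f (c s) w) (hc : HasDerivAt c v s) :
    HasDerivAt (f ∘ c) (-g v v) s := by
  have h := hf.hasFDerivAt.comp_hasDerivAt s hc
  rwa [← hgrad, map_neg, neg_apply] at h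

theorem hasDerivAt_apply_apply {B : 𝕜 → F →L[𝕜] F →L[𝕜] H} {u w : 𝕜 → F}
    {B' : F →L[𝕜] F →L[𝕜] H} {u' w' : F} {t : 𝕜} (hB : HasDerivAt B B' t)
    (hu : HasDerivAt u u' t) (hw : HasDerivAt w w' t) :
    HasDerivAt (fun s => B s (u s) (w s)) (B' (u t) (w t) + B t u' (w t) + B t (u t) w') t := by
  simpa only [add_apply] using (hB.clm_apply hu).clm_apply hw

theorem hasDerivAt_energy_of_autoparallel {g : F → F →L[𝕜] F →L[𝕜] 𝕜}
    {g' : F →L[𝕜] F →L[𝕜] F →L[𝕜] 𝕜} {Γ : F →L[𝕜] F →L[𝕜] F} {c c' : 𝕜 → F} {a : F}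
    {μ t : 𝕜} (hg : HasFDerivAt g g' (c t)) (hc : HasDerivAt c (c' t) t) (hc' : HasDerivAt c' a t)
    (hauto : a + Γ (c' t) (c' t) = μ • c' t) :
    HasDerivAt (fun s => g (c s) (c' s) (c' s))
      (nonmetricity g' (g (c t)) Γ (c' t) (c' t) (c' t) + 2 * μ * g (c t) (c' t) (c' t)) t := by
  have hB : HasDerivAt (fun s => g (c s)) (g' (c' t)) t :=
    HasFDerivAt.comp_hasDerivAt (l := g) t hg hc
  refine (hasDerivAt_apply_apply hB hc' hc').congr_deriv ?_
  rw [eq_sub_of_add_eq hauto]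
  simp only [nonmetricity, map_sub, map_smul, sub_apply, smul_apply, smul_eq_mul]
  ring

end GradientFlow

open GradientFlow

theorem second_derivative_along_gradient_flow_general
    (n : ℕ)
    (U : Set (E n)) (hU : IsOpen U)
    -- a smooth Riemannian metric on `U`
    (g : E n → E n →L[ℝ] E n →L[ℝ] ℝ)
    (hg_smooth : ContDiffOn ℝ (⊤ : ℕ∞) g U)
    -- a smooth function `f` with `g`-gradient `G`
    (f : E n → ℝ) (hf : ContDiff ℝ (⊤ : ℕ∞) f)
    (G : E n → E n) (hG_smooth : ContDiffOn ℝ (⊤ : ℕ∞) G U)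
    (hG : ∀ x ∈ U, ∀ v : E n, g x (G x) v = fderiv ℝ f x v)
    -- a smooth factor `λ`
    (lam : E n → ℝ)
    -- a connection `Γ` on `U` straightening `f` with factor `λ`
    (Γ : E n → E n →L[ℝ] E n →L[ℝ] E n)
    (hstr : ∀ x ∈ U, fderiv ℝ G x (G x) + Γ x (G x) (G x) = lam x • G x)
    -- the non-metricity tensor `C` of `Γ` relative to `g`
    (C : E n → E n → E n → E n → ℝ)
    (hC : ∀ x ∈ U, ∀ w u v : E n,
      C x w u v = fderiv ℝ (fun y => g y u v) x w - g x (Γ x w u) v - g x u (Γ x w v)) :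
    -- along every gradient descent curve of `f`:
    ∀ γ : ℝ → E n, (∀ t : ℝ, γ t ∈ U) → ContDiff ℝ 1 γ →
      (∀ t : ℝ, deriv γ t = -G (γ t)) →
      ∀ t : ℝ,
        deriv (deriv (f ∘ γ)) t
          = -C (γ t) (deriv γ t) (deriv γ t) (deriv γ t)
            - 2 * lam (γ t) * deriv (f ∘ γ) t := by
  intro γ hγU hγ hγ' t
  have hgd : DifferentiableAt ℝ g (γ t) :=
    (hg_smooth.contDiffAt (hU.mem_nhds (hγU t))).differentiableAt (by simp)
  have hGd : DifferentiableAt ℝ G (γ t) :=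
    (hG_smooth.contDiffAt (hU.mem_nhds (hγU t))).differentiableAt (by simp)
  have hvel : ∀ s, HasDerivAt γ (deriv γ s) s := fun s =>
    ((hγ.differentiable one_ne_zero) s).hasDerivAt
  have hfirst : deriv (f ∘ γ) = fun s => -g (γ s) (deriv γ s) (deriv γ s) := by
    refine funext fun s => (hasDerivAt_comp_of_hasDerivAt_neg_gradient
      (hf.differentiable (by simp) _) (fun w => ?_) (hvel s)).deriv
    rw [hγ' s, neg_neg, hG _ (hγU s)]
  have hacc : HasDerivAt (deriv γ) (-fderiv ℝ G (γ t) (deriv γ t)) t :=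
    (hGd.hasFDerivAt.comp_hasDerivAt t (hvel t)).neg.congr_of_eventuallyEq
      (Filter.Eventually.of_forall hγ')
  have hauto : -fderiv ℝ G (γ t) (deriv γ t) + Γ (γ t) (deriv γ t) (deriv γ t)
      = -lam (γ t) • deriv γ t := by
    simp only [hγ', map_neg, neg_apply, neg_neg, hstr _ (hγU t), smul_neg, neg_smul]
  have hCγ : C (γ t) (deriv γ t) (deriv γ t) (deriv γ t) =
      nonmetricity (fderiv ℝ g (γ t)) (g (γ t)) (Γ (γ t)) (deriv γ t) (deriv γ t) (deriv γ t) := by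
    rw [hC _ (hγU t), fderiv_apply_apply_const hgd, nonmetricity]
  have hsecond : deriv (deriv (f ∘ γ)) t = -(nonmetricity (fderiv ℝ g (γ t)) (g (γ t)) (Γ (γ t))
      (deriv γ t) (deriv γ t) (deriv γ t) + 2 * -lam (γ t) * g (γ t) (deriv γ t) (deriv γ t)) := by
    rw [hfirst]
    exact (hasDerivAt_energy_of_autoparallel hgd.hasFDerivAt (hvel t) hacc hauto).neg.deriv
  rw [hsecond, hCγ, hfirst]
  ring

/-- **Eq. (7) of the paper.** Along every gradient descent curve `γ` of `f`, for a connection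
straightening `f` with factor `λ` and non-metricity tensor `C`, one has
`(f ∘ γ)'' = −C(γ̇, γ̇, γ̇) − 2 λ(γ) (f ∘ γ)'`. -/
theorem second_derivative_along_gradient_flow
    (n : ℕ) (hn : 1 ≤ n)
    (U : Set (E n)) (hU : IsOpen U)
    -- a smooth Riemannian metric on `U`
    (g : E n → E n →L[ℝ] E n →L[ℝ] ℝ)
    (hg_smooth : ContDiffOn ℝ (⊤ : ℕ∞) g U)
    (hg_symm : ∀ x ∈ U, ∀ u v : E n, g x u v = g x v u)
    (hg_pos : ∀ x ∈ U, ∀ v : E n, v ≠ 0 → 0 < g x v v)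
    -- a smooth function `f` with `g`-gradient `G`
    (f : E n → ℝ) (hf : ContDiff ℝ (⊤ : ℕ∞) f)
    (G : E n → E n) (hG_smooth : ContDiffOn ℝ (⊤ : ℕ∞) G U)
    (hG : ∀ x ∈ U, ∀ v : E n, g x (G x) v = fderiv ℝ f x v)
    -- a smooth factor `λ`
    (lam : E n → ℝ) (hlam : ContDiffOn ℝ (⊤ : ℕ∞) lam U)
    -- a connection `Γ` on `U` straightening `f` with factor `λ`
    (Γ : E n → E n →L[ℝ] E n →L[ℝ] E n)
    (hΓ_smooth : ContDiffOn ℝ (⊤ : ℕ∞) Γ U)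
    (hstr : ∀ x ∈ U, fderiv ℝ G x (G x) + Γ x (G x) (G x) = lam x • G x)
    -- the non-metricity tensor `C` of `Γ` relative to `g`
    (C : E n → E n → E n → E n → ℝ)
    (hC : ∀ x ∈ U, ∀ w u v : E n,
      C x w u v = fderiv ℝ (fun y => g y u v) x w - g x (Γ x w u) v - g x u (Γ x w v)) :
    -- along every gradient descent curve of `f`:
    ∀ γ : ℝ → E n, (∀ t : ℝ, γ t ∈ U) → ContDiff ℝ 1 γ →
      (∀ t : ℝ, deriv γ t = -G (γ t)) →
      ∀ t : ℝ,
        deriv (deriv (f ∘ γ)) t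
          = -C (γ t) (deriv γ t) (deriv γ t) (deriv γ t)
            - 2 * lam (γ t) * deriv (f ∘ γ) t :=
  second_derivative_along_gradient_flow_general n U hU g hg_smooth f hf G hG_smooth hG lam Γ hstr C
    hC

end
end

section
/- Let g be a smooth Riemannian metric on an open set U ⊆ E, let f : E → ℝ be smooth with g-gradient G, let λ : U → ℝ be smooth, and let Γ be a connection on U that straightens f with factor λ, with non-metricity tensor C. Then along every gradient descent curve γ of f, the non-metricity component along the flow is expressed through the Levi-Civita covariant acceleration: for all t, C (γ t) (deriv γ t) (deriv γ t) (deriv γ t) = 2 * ( λ (γ t) * g (γ t) (deriv γ t) (deriv γ t) + g (γ t) (deriv γ t) (deriv (deriv γ) t + Γ^g (γ t) (deriv γ t) (deriv γ t)) ), where deriv (deriv γ) t + Γ^g (γ t) (deriv γ t) (deriv γ t) is the Levi-Civita covariant acceleration ∇^g_{γ̇} γ̇. -/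
/-!
Put `u = γ̇ = -G(γ)`. The Levi-Civita formula on the diagonal gives `2 g(Γ^g(u,u), u) = (D_u g)(u,u)`,
so the cubic non-metricity is `C(u,u,u) = 2 g(u, Γ^g(u,u) - Γ(u,u))`, the pairing of `u` with the
difference of the two covariant accelerations `γ̈ + Γ^g(u,u)` and `γ̈ + Γ(u,u)`. Since `γ̈ = DG(G)`,
straightening says exactly that `γ̈ + Γ(u,u) = -λ u`: gradient descent curves are pregeodesics of `Γ`.
-/

open scoped Topology

noncomputable section

section

variable {F : Type*} [NormedAddCommGroup F] [NormedSpace ℝ F]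

def nonmetricity (g : F → F →L[ℝ] F →L[ℝ] ℝ) (Γ : F → F →L[ℝ] F →L[ℝ] F) (x w u v : F) : ℝ :=
  fderiv ℝ (fun y => g y u v) x w - g x (Γ x w u) v - g x u (Γ x w v)

def covariantAcceleration (Γ : F → F →L[ℝ] F →L[ℝ] F) (γ : ℝ → F) (t : ℝ) : F :=
  deriv (deriv γ) t + Γ (γ t) (deriv γ t) (deriv γ t)

theorem nonmetricity_self_eq {g : F → F →L[ℝ] F →L[ℝ] ℝ} {Γ Γg : F → F →L[ℝ] F →L[ℝ] F} {x : F}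
    (hg_symm : ∀ u v, g x u v = g x v u)
    (hΓg : ∀ u v w, 2 * g x (Γg x u v) w
      = fderiv ℝ (fun y => g y v w) x u + fderiv ℝ (fun y => g y u w) x v
        - fderiv ℝ (fun y => g y u v) x w)
    (u : F) :
    nonmetricity g Γ x u u u = 2 * g x u (Γg x u u - Γ x u u) := by
  have hLC : 2 * g x (Γg x u u) u = fderiv ℝ (fun y => g y u u) x u := by
    rw [hΓg]; ring
  rw [nonmetricity, map_sub, ← hLC, hg_symm u (Γg x u u), hg_symm u (Γ x u u)]
  ring

theorem deriv_deriv_of_deriv_eq_neg {G : F → F} {γ : ℝ → F} (hγ : Differentiable ℝ γ)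
    (hode : ∀ s, deriv γ s = -G (γ s)) {t : ℝ} (hG : DifferentiableAt ℝ G (γ t)) :
    deriv (deriv γ) t = fderiv ℝ G (γ t) (G (γ t)) := by
  have hGγ : HasDerivAt (fun s => G (γ s)) (fderiv ℝ G (γ t) (deriv γ t)) t :=
    hG.hasFDerivAt.comp_hasDerivAt t (hγ t).hasDerivAt
  rw [funext hode, deriv.fun_neg, hGγ.deriv, hode, map_neg, neg_neg]

theorem covariantAcceleration_eq_neg_smul_of_straightens {G : F → F} {Γ : F → F →L[ℝ] F →L[ℝ] F}
    {lam : F → ℝ} {γ : ℝ → F} (hγ : Differentiable ℝ γ) (hode : ∀ s, deriv γ s = -G (γ s))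
    {t : ℝ} (hG : DifferentiableAt ℝ G (γ t))
    (hstr : fderiv ℝ G (γ t) (G (γ t)) + Γ (γ t) (G (γ t)) (G (γ t)) = lam (γ t) • G (γ t)) :
    covariantAcceleration Γ γ t = -lam (γ t) • deriv γ t := by
  rw [covariantAcceleration, deriv_deriv_of_deriv_eq_neg hγ hode hG, hode, map_neg, map_neg,
    neg_apply, neg_neg, hstr, neg_smul_neg]

end

theorem nonmetricity_via_covariant_acceleration_general
    (n : ℕ)
    (U : Set (E n)) (hU : IsOpen U)
    -- a smooth Riemannian metric on `U`
    (g : E n → E n →L[ℝ] E n →L[ℝ] ℝ)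
    (hg_symm : ∀ x ∈ U, ∀ u v : E n, g x u v = g x v u)
    (G : E n → E n) (hG_smooth : ContDiffOn ℝ (⊤ : ℕ∞) G U)
    -- a smooth factor `λ`
    (lam : E n → ℝ)
    -- a connection `Γ` on `U` straightening `f` with factor `λ`
    (Γ : E n → E n →L[ℝ] E n →L[ℝ] E n)
    (hstr : ∀ x ∈ U, fderiv ℝ G x (G x) + Γ x (G x) (G x) = lam x • G x)
    -- the non-metricity tensor `C` of `Γ` relative to `g`
    (C : E n → E n → E n → E n → ℝ)
    (hC : ∀ x ∈ U, ∀ w u v : E n,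
      C x w u v = fderiv ℝ (fun y => g y u v) x w - g x (Γ x w u) v - g x u (Γ x w v))
    -- the Levi-Civita Christoffel form of `g`
    (Γg : E n → E n →L[ℝ] E n →L[ℝ] E n)
    (hΓg : ∀ x ∈ U, ∀ u v w : E n,
      2 * g x (Γg x u v) w
        = fderiv ℝ (fun y => g y v w) x u + fderiv ℝ (fun y => g y u w) x v
          - fderiv ℝ (fun y => g y u v) x w) :
    -- along every gradient descent curve of `f`:
    ∀ γ : ℝ → E n, (∀ t : ℝ, γ t ∈ U) → ContDiff ℝ 1 γ →
      (∀ t : ℝ, deriv γ t = -G (γ t)) →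
      ∀ t : ℝ,
        C (γ t) (deriv γ t) (deriv γ t) (deriv γ t)
          = 2 * (lam (γ t) * g (γ t) (deriv γ t) (deriv γ t)
              + g (γ t) (deriv γ t)
                  (deriv (deriv γ) t + Γg (γ t) (deriv γ t) (deriv γ t))) := by
  intro γ hγU hγ hode t
  have hx := hγU t
  have hG : DifferentiableAt ℝ G (γ t) :=
    (hG_smooth.contDiffAt (hU.mem_nhds hx)).differentiableAt (by simp)
  have hpregeodesic : covariantAcceleration Γ γ t = -lam (γ t) • deriv γ t :=
    covariantAcceleration_eq_neg_smul_of_straightens (hγ.differentiable one_ne_zero) hode hG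
      (hstr _ hx)
  have hdiff : Γg (γ t) (deriv γ t) (deriv γ t) - Γ (γ t) (deriv γ t) (deriv γ t)
      = covariantAcceleration Γg γ t + lam (γ t) • deriv γ t := by
    rw [covariantAcceleration] at hpregeodesic
    rw [eq_sub_of_add_eq' hpregeodesic, covariantAcceleration]
    module
  rw [hC _ hx, ← nonmetricity, nonmetricity_self_eq (hg_symm _ hx) (hΓg _ hx), hdiff, map_add,
    map_smul, smul_eq_mul, covariantAcceleration]
  ring

/-- **Eq. (9) of the paper.** Along every gradient descent curve `γ` of `f`, the non-metricity
component of a straightening connection along the flow is expressed through the Levi-Civita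
covariant acceleration:
`C(γ̇, γ̇, γ̇) = 2 [λ(γ) g(γ̇, γ̇) + g(γ̇, ∇^g_{γ̇} γ̇)]`,
where `∇^g_{γ̇} γ̇ = γ̈ + Γ^g(γ̇, γ̇)`. -/
theorem nonmetricity_via_covariant_acceleration
    (n : ℕ) (hn : 1 ≤ n)
    (U : Set (E n)) (hU : IsOpen U)
    -- a smooth Riemannian metric on `U`
    (g : E n → E n →L[ℝ] E n →L[ℝ] ℝ)
    (hg_smooth : ContDiffOn ℝ (⊤ : ℕ∞) g U)
    (hg_symm : ∀ x ∈ U, ∀ u v : E n, g x u v = g x v u)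
    (hg_pos : ∀ x ∈ U, ∀ v : E n, v ≠ 0 → 0 < g x v v)
    -- a smooth function `f` with `g`-gradient `G`
    (f : E n → ℝ) (hf : ContDiff ℝ (⊤ : ℕ∞) f)
    (G : E n → E n) (hG_smooth : ContDiffOn ℝ (⊤ : ℕ∞) G U)
    (hG : ∀ x ∈ U, ∀ v : E n, g x (G x) v = fderiv ℝ f x v)
    -- a smooth factor `λ`
    (lam : E n → ℝ) (hlam : ContDiffOn ℝ (⊤ : ℕ∞) lam U)
    -- a connection `Γ` on `U` straightening `f` with factor `λ`
    (Γ : E n → E n →L[ℝ] E n →L[ℝ] E n)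
    (hΓ_smooth : ContDiffOn ℝ (⊤ : ℕ∞) Γ U)
    (hstr : ∀ x ∈ U, fderiv ℝ G x (G x) + Γ x (G x) (G x) = lam x • G x)
    -- the non-metricity tensor `C` of `Γ` relative to `g`
    (C : E n → E n → E n → E n → ℝ)
    (hC : ∀ x ∈ U, ∀ w u v : E n,
      C x w u v = fderiv ℝ (fun y => g y u v) x w - g x (Γ x w u) v - g x u (Γ x w v))
    -- the Levi-Civita Christoffel form of `g`
    (Γg : E n → E n →L[ℝ] E n →L[ℝ] E n)
    (hΓg : ∀ x ∈ U, ∀ u v w : E n,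
      2 * g x (Γg x u v) w
        = fderiv ℝ (fun y => g y v w) x u + fderiv ℝ (fun y => g y u w) x v
          - fderiv ℝ (fun y => g y u v) x w) :
    -- along every gradient descent curve of `f`:
    ∀ γ : ℝ → E n, (∀ t : ℝ, γ t ∈ U) → ContDiff ℝ 1 γ →
      (∀ t : ℝ, deriv γ t = -G (γ t)) →
      ∀ t : ℝ,
        C (γ t) (deriv γ t) (deriv γ t) (deriv γ t)
          = 2 * (lam (γ t) * g (γ t) (deriv γ t) (deriv γ t)
              + g (γ t) (deriv γ t)
                  (deriv (deriv γ) t + Γg (γ t) (deriv γ t) (deriv γ t))) :=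
  nonmetricity_via_covariant_acceleration_general n U hU g hg_symm G hG_smooth lam Γ hstr C hC Γg
    hΓg

end
end

section
/- Let h : ℝ → ℝ be continuous on [0, ∞), with h and deriv h differentiable at every t > 0. Assume h 0 = 0, h t tends to 0 as t → ∞, and for every t > 0 with deriv h t = 0 one has deriv (deriv h) t < 0 (every interior critical point is a strict local maximum). Then h t ≥ 0 for all t ≥ 0. -/
open scoped Topology

/-- **Analytic lemma.** If `h` is continuous on `[0, ∞)`, twice differentiable on `(0, ∞)`,
`h 0 = 0`, `h → 0` at infinity, and every interior critical point of `h` is a strict local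
maximum (`h'' < 0` wherever `h' = 0`), then `h ≥ 0` on `[0, ∞)`. -/
theorem nonneg_of_critical_points_are_maxima
    (h : ℝ → ℝ)
    (hcont : ContinuousOn h (Set.Ici 0))
    (hdiff : ∀ t : ℝ, 0 < t → DifferentiableAt ℝ h t)
    (hdiff2 : ∀ t : ℝ, 0 < t → DifferentiableAt ℝ (deriv h) t)
    (h0 : h 0 = 0)
    (hlim : Filter.Tendsto h Filter.atTop (nhds 0))
    (hcrit : ∀ t : ℝ, 0 < t → deriv h t = 0 → deriv (deriv h) t < 0) :
    ∀ t : ℝ, 0 ≤ t → 0 ≤ h t := by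
  by_contra hcon
  push_neg at hcon
  obtain ⟨t0, ht0, hneg⟩ := hcon
  -- choose T beyond which h > h t0 / 2
  have hhalf : h t0 / 2 < 0 := by linarith
  have hev : ∀ᶠ t in Filter.atTop, h t0 / 2 < h t :=
    hlim.eventually (eventually_gt_nhds hhalf)
  obtain ⟨T0, hT0⟩ := hev.exists_forall_of_atTop
  set T : ℝ := max T0 t0 with hT
  have ht0T : t0 ≤ T := le_max_right _ _
  have hTbig : ∀ t ≥ T, h t0 / 2 < h t := fun t ht => hT0 t (le_trans (le_max_left _ _) ht)
  -- minimum on [0, T]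
  have hcontT : ContinuousOn h (Set.Icc 0 T) :=
    hcont.mono (fun x hx => hx.1)
  have hne : (Set.Icc (0:ℝ) T).Nonempty := ⟨t0, ht0, ht0T⟩
  obtain ⟨c, hcmem, hcmin⟩ := isCompact_Icc.exists_isMinOn hne hcontT
  have hct0 : h c ≤ h t0 := hcmin ⟨ht0, ht0T⟩
  have hcneg : h c < 0 := lt_of_le_of_lt hct0 hneg
  have hc0 : 0 < c := by
    rcases lt_or_eq_of_le hcmem.1 with h' | h'
    · exact h'
    · exfalso; rw [← h', h0] at hcneg; exact lt_irrefl 0 hcneg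
  have hcT : c < T := by
    rcases lt_or_eq_of_le hcmem.2 with h' | h'
    · exact h'
    · exfalso
      have := hTbig T le_rfl
      rw [h'] at hcneg hct0
      linarith
  -- c is an interior local min, so deriv h c = 0
  have hlocmin : IsLocalMin h c := by
    have : Set.Icc (0:ℝ) T ∈ 𝓝 c := Icc_mem_nhds hc0 hcT
    exact Filter.eventually_of_mem this (fun x hx => hcmin hx)
  have hderiv0 : deriv h c = 0 := hlocmin.deriv_eq_zero
  have h2 : deriv (deriv h) c < 0 := hcrit c hc0 hderiv0
  -- slope of deriv h near c from the right is close to deriv (deriv h) c < 0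
  have hslope : Filter.Tendsto (slope (deriv h) c) (𝓝[≠] c) (𝓝 (deriv (deriv h) c)) :=
    hasDerivAt_iff_tendsto_slope.1 (hdiff2 c hc0).hasDerivAt
  have hslope' : ∀ᶠ x in 𝓝[>] c, slope (deriv h) c x < 0 := by
    have : ∀ᶠ x in 𝓝[≠] c, slope (deriv h) c x < 0 :=
      hslope.eventually (eventually_lt_nhds h2)
    exact this.filter_mono (nhdsWithin_mono c (fun x hx => ne_of_gt hx))
  obtain ⟨u, hu, huIoc⟩ := mem_nhdsGT_iff_exists_Ioc_subset.1 hslope'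
  -- hence deriv h x < 0 for x ∈ (c, u]
  have hderivneg : ∀ x ∈ Set.Ioc c u, deriv h x < 0 := by
    intro x hx
    have hs := huIoc hx
    simp only [Set.mem_setOf_eq, slope_def_field, hderiv0, sub_zero] at hs
    have hxc : 0 < x - c := sub_pos.2 hx.1
    have : deriv h x / (x - c) < 0 := hs
    rcases div_neg_iff.1 this with ⟨_, h2⟩ | ⟨h1, _⟩
    · linarith
    · exact h1
  -- pick x ∈ (c, u] with x < T
  set x : ℝ := min u ((c + T) / 2) with hx
  have hcu : c < u := hu
  have hcx : c < x := lt_min hcu (by linarith)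
  have hxT : x < T := lt_of_le_of_lt (min_le_right _ _) (by linarith)
  have hxu : x ≤ u := min_le_left _ _
  -- MVT on [c, x]
  have hcontcx : ContinuousOn h (Set.Icc c x) :=
    hcont.mono (fun y hy => le_trans hc0.le hy.1)
  have hdiffcx : ∀ y ∈ Set.Ioo c x, HasDerivAt h (deriv h y) y := by
    intro y hy
    exact (hdiff y (lt_trans hc0 hy.1)).hasDerivAt
  obtain ⟨ξ, hξ, hξeq⟩ := exists_hasDerivAt_eq_slope h (deriv h) hcx hcontcx hdiffcx
  have hξneg : deriv h ξ < 0 := hderivneg ξ ⟨hξ.1, le_trans hξ.2.le hxu⟩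
  have hxmin : h c ≤ h x := hcmin ⟨le_trans hc0.le hcx.le, hxT.le⟩
  rw [hξeq] at hξneg
  have : 0 < x - c := sub_pos.2 hcx
  have : (h x - h c) / (x - c) ≥ 0 := div_nonneg (by linarith) this.le
  linarith
end

section
/- Let h₁, h₂ : ℝ → ℝ be continuous on [0, ∞), with h₁, h₂, deriv h₁, deriv h₂ differentiable at every t > 0. Assume h₁ 0 = h₂ 0, both h₁ and h₂ tend to the same limit m as t → ∞, and for every t > 0 with deriv h₁ t = deriv h₂ t one has deriv (deriv h₂) t < deriv (deriv h₁) t. Then h₁ t ≤ h₂ t for all t ≥ 0. -/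
/-!
If `h₁ - h₂` were positive somewhere, then, vanishing at `0` and at infinity, it would attain a
positive global maximum on `[0, ∞)` at some `s > 0`. There `h₁' s = h₂' s`, so the hypothesis
makes `(h₁ - h₂)'' s > 0`, which the second-derivative test forbids at a local maximum.
-/

open Filter Topology Set

theorem IsLocalMax.deriv_deriv_nonpos {f : ℝ → ℝ} {x : ℝ} (hmax : IsLocalMax f x)
    (hc : ContinuousAt f x) : deriv (deriv f) x ≤ 0 := by
  by_contra! hpos
  have hmin : IsLocalMin f x := isLocalMin_of_deriv_deriv_pos hpos hmax.deriv_eq_zero hc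
  have hconst : f =ᶠ[𝓝 x] fun _ ↦ f x :=
    (hmin.and hmax).mono fun y hy ↦ le_antisymm hy.2 hy.1
  have : deriv (deriv f) x = 0 := by simp [hconst.deriv.deriv_eq]
  exact hpos.ne' this

theorem ContinuousOn.exists_isMaxOn_Ici_of_tendsto_atTop {β : Type*} [LinearOrder β]
    [TopologicalSpace β] [ClosedIciTopology β] [CompactIccSpace β]
    {α : Type*} [LinearOrder α] [TopologicalSpace α] [ClosedIciTopology α]
    {g : β → α} {a t₀ : β} {L : α} (hg : ContinuousOn g (Ici a))
    (hlim : Tendsto g atTop (𝓝 L)) (ht₀ : a ≤ t₀) (hL : L < g t₀) :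
    ∃ s, a ≤ s ∧ IsMaxOn g (Ici a) s := by
  have : Nonempty β := ⟨a⟩
  obtain ⟨R, hR⟩ := eventually_atTop.1 (hlim.eventually_lt_const hL)
  refine hg.exists_isMaxOn' isClosed_Ici ht₀ (mem_inf_principal.2 <| mem_cocompact.2
    ⟨Icc a R, isCompact_Icc, fun t ht hat ↦ (hR t ?_).le⟩)
  by_contra! htR
  exact ht ⟨hat, htR.le⟩

theorem deriv_deriv_sub {f g : ℝ → ℝ} {x : ℝ} (hf : ∀ᶠ y in 𝓝 x, DifferentiableAt ℝ f y)
    (hg : ∀ᶠ y in 𝓝 x, DifferentiableAt ℝ g y) (hf' : DifferentiableAt ℝ (deriv f) x)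
    (hg' : DifferentiableAt ℝ (deriv g) x) :
    deriv (deriv (f - g)) x = deriv (deriv f) x - deriv (deriv g) x := by
  have : deriv (f - g) =ᶠ[𝓝 x] deriv f - deriv g :=
    (hf.and hg).mono fun y hy ↦ deriv_sub hy.1 hy.2
  rw [this.deriv_eq, deriv_sub hf' hg']

/-- **Analytic core of the asymmetry criterion.** If `h₁, h₂` are continuous on `[0, ∞)`,
twice differentiable on `(0, ∞)`, start at the same value, tend to the same limit `m` at
infinity, and at every time `t > 0` where their derivatives agree one has
`h₂'' t < h₁'' t`, then `h₁ t ≤ h₂ t` for all `t ≥ 0`. -/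
theorem comparison_of_relaxations
    (h₁ h₂ : ℝ → ℝ)
    (hcont₁ : ContinuousOn h₁ (Set.Ici 0))
    (hcont₂ : ContinuousOn h₂ (Set.Ici 0))
    (hdiff₁ : ∀ t : ℝ, 0 < t → DifferentiableAt ℝ h₁ t)
    (hdiff₂ : ∀ t : ℝ, 0 < t → DifferentiableAt ℝ h₂ t)
    (hdiff₁' : ∀ t : ℝ, 0 < t → DifferentiableAt ℝ (deriv h₁) t)
    (hdiff₂' : ∀ t : ℝ, 0 < t → DifferentiableAt ℝ (deriv h₂) t)
    (h0 : h₁ 0 = h₂ 0)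
    (m : ℝ)
    (hlim₁ : Filter.Tendsto h₁ Filter.atTop (nhds m))
    (hlim₂ : Filter.Tendsto h₂ Filter.atTop (nhds m))
    (hcrit : ∀ t : ℝ, 0 < t → deriv h₁ t = deriv h₂ t →
      deriv (deriv h₂) t < deriv (deriv h₁) t) :
    ∀ t : ℝ, 0 ≤ t → h₁ t ≤ h₂ t := by
  by_contra! ⟨t₀, ht₀, hgt⟩
  have hlim : Tendsto (h₁ - h₂) atTop (𝓝 0) := sub_self m ▸ hlim₁.sub hlim₂
  obtain ⟨s, hs, hmax⟩ := (hcont₁.sub hcont₂).exists_isMaxOn_Ici_of_tendsto_atTop hlim ht₀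
    (sub_pos.2 hgt)
  have hs₀ : 0 < s := hs.lt_of_ne <| by
    rintro rfl
    exact hgt.not_ge (by simpa [h0] using hmax ht₀)
  have hd₁ : ∀ᶠ t in 𝓝 s, DifferentiableAt ℝ h₁ t := (lt_mem_nhds hs₀).mono hdiff₁
  have hd₂ : ∀ᶠ t in 𝓝 s, DifferentiableAt ℝ h₂ t := (lt_mem_nhds hs₀).mono hdiff₂
  have hloc : IsLocalMax (h₁ - h₂) s := hmax.isLocalMax (Ici_mem_nhds hs₀)
  have hcrit_s : deriv h₁ s = deriv h₂ s := by
    have := hloc.deriv_eq_zero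
    rwa [deriv_sub (hdiff₁ s hs₀) (hdiff₂ s hs₀), sub_eq_zero] at this
  have := hloc.deriv_deriv_nonpos ((hdiff₁ s hs₀).sub (hdiff₂ s hs₀)).continuousAt
  rw [deriv_deriv_sub hd₁ hd₂ (hdiff₁' s hs₀) (hdiff₂' s hs₀)] at this
  linarith [hcrit s hs₀ hcrit_s]
end

section
/- For all real v₁ > 0 and v₂ > 0, the Kullback–Leibler divergence of the centered real Gaussian measure with variance v₁ from the centered real Gaussian measure with variance v₂ equals (1/2) * (v₁/v₂ − Real.log (v₁/v₂) − 1). In Mathlib terms: klDiv (gaussianReal 0 v₁) (gaussianReal 0 v₂) = ENNReal.ofReal ((1/2) * (v₁/v₂ − Real.log (v₁/v₂) − 1)). -/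
open MeasureTheory ProbabilityTheory
open scoped ENNReal NNReal Classical

/-!
Both Gaussians have Lebesgue densities and the density of the reference measure is everywhere
positive, so the log-likelihood ratio is the difference of the two log-densities, a quadratic
polynomial in `x`. Integrating it against `N(μ₁, v₁)` needs only the second moments
`∫ (x - c)² dN(μ₁, v₁) = v₁ + (μ₁ - c)²`, which come from the variance.
-/

/-- The Kullback–Leibler divergence of `μ` with respect to `ν`, valued in `ℝ≥0∞`
(as defined in Mathlib): `∫ log (dμ/dν) dμ` when `μ ≪ ν` and the log-likelihood ratio is
`μ`-integrable, and `∞` otherwise. -/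
noncomputable def klDiv (μ ν : Measure ℝ) : ℝ≥0∞ :=
  if μ ≪ ν ∧ Integrable (llr μ ν) μ then ENNReal.ofReal (∫ x, llr μ ν x ∂μ) else ⊤

open Real

namespace ProbabilityTheory

variable {μ : ℝ} {v v₁ v₂ : ℝ≥0}

lemma log_gaussianPDFReal (hv : v ≠ 0) (x : ℝ) :
    log (gaussianPDFReal μ v x) = -log (2 * π * v) / 2 - (x - μ) ^ 2 / (2 * v) := by
  have hv' : (0 : ℝ) < v := by positivity
  rw [gaussianPDFReal, log_mul (by positivity) (exp_ne_zero _), log_inv, log_exp,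
    log_sqrt (by positivity)]
  ring

lemma memLp_sub_const_gaussianReal (c : ℝ) : MemLp (fun x ↦ x - c) 2 (gaussianReal μ v) :=
  (memLp_id_gaussianReal 2).sub (memLp_const c)

lemma integral_sub_sq_gaussianReal (c : ℝ) :
    ∫ x, (x - c) ^ 2 ∂gaussianReal μ v = v + (μ - c) ^ 2 := by
  have hvar := variance_eq_sub (memLp_sub_const_gaussianReal (μ := μ) (v := v) c)
  have hint : Integrable (fun x ↦ x) (gaussianReal μ v) :=
    (memLp_id_gaussianReal 1).integrable le_rfl
  rw [variance_sub_const measurable_id'.aestronglyMeasurable, variance_fun_id_gaussianReal,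
    integral_sub hint (integrable_const c)] at hvar
  simp only [Pi.pow_apply, integral_id_gaussianReal, integral_const, probReal_univ, smul_eq_mul,
    one_mul] at hvar
  linarith

variable (v₁) in
lemma integrable_log_gaussianPDFReal (μ₁ μ₂ : ℝ) (hv₂ : v₂ ≠ 0) :
    Integrable (fun x ↦ log (gaussianPDFReal μ₂ v₂ x)) (gaussianReal μ₁ v₁) := by
  simp_rw [log_gaussianPDFReal hv₂]
  exact (integrable_const _).sub ((memLp_sub_const_gaussianReal μ₂).integrable_sq.div_const _)

lemma integral_log_gaussianPDFReal (μ₁ μ₂ : ℝ) (hv₂ : v₂ ≠ 0) :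
    ∫ x, log (gaussianPDFReal μ₂ v₂ x) ∂gaussianReal μ₁ v₁
      = -(log (2 * π * v₂) + (v₁ + (μ₁ - μ₂) ^ 2) / v₂) / 2 := by
  simp_rw [log_gaussianPDFReal hv₂]
  rw [integral_sub (integrable_const _)
      ((memLp_sub_const_gaussianReal μ₂).integrable_sq.div_const _),
    integral_const, integral_div, integral_sub_sq_gaussianReal]
  simp only [probReal_univ, smul_eq_mul, one_mul]
  field_simp
  ring

variable (v₁) in
lemma rnDeriv_gaussianReal_gaussianReal (μ₁ μ₂ : ℝ) (hv₂ : v₂ ≠ 0) :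
    ∂(gaussianReal μ₁ v₁)/∂(gaussianReal μ₂ v₂)
      =ᵐ[volume] fun x ↦ (gaussianPDF μ₂ v₂ x)⁻¹ * gaussianPDF μ₁ v₁ x := by
  have h := Measure.rnDeriv_withDensity_right (gaussianReal μ₁ v₁) volume
    (measurable_gaussianPDF μ₂ v₂).aemeasurable
    (ae_of_all _ fun x ↦ (gaussianPDF_pos μ₂ hv₂ x).ne') (ae_of_all _ fun _ ↦ ENNReal.ofReal_ne_top)
  rw [← gaussianReal_of_var_ne_zero μ₂ hv₂] at h
  filter_upwards [h, rnDeriv_gaussianReal μ₁ v₁] with x hx hx₁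
  rw [hx, hx₁]

lemma llr_gaussianReal_gaussianReal (μ₁ μ₂ : ℝ) (hv₁ : v₁ ≠ 0) (hv₂ : v₂ ≠ 0) :
    llr (gaussianReal μ₁ v₁) (gaussianReal μ₂ v₂) =ᵐ[gaussianReal μ₁ v₁]
      fun x ↦ log (gaussianPDFReal μ₁ v₁ x) - log (gaussianPDFReal μ₂ v₂ x) := by
  refine (gaussianReal_absolutelyContinuous μ₁ hv₁).ae_eq ?_
  filter_upwards [rnDeriv_gaussianReal_gaussianReal v₁ μ₁ μ₂ hv₂] with x hx
  simp only [llr_def, hx]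
  rw [ENNReal.toReal_mul, ENNReal.toReal_inv, toReal_gaussianPDF, toReal_gaussianPDF,
    log_mul (inv_ne_zero (gaussianPDFReal_pos μ₂ v₂ x hv₂).ne')
      (gaussianPDFReal_pos μ₁ v₁ x hv₁).ne', log_inv]
  ring

lemma klDiv_gaussianReal (μ₁ μ₂ : ℝ) (hv₁ : v₁ ≠ 0) (hv₂ : v₂ ≠ 0) :
    klDiv (gaussianReal μ₁ v₁) (gaussianReal μ₂ v₂) = ENNReal.ofReal
      ((1 / 2) * ((v₁ : ℝ) / v₂ + (μ₁ - μ₂) ^ 2 / v₂ - log ((v₁ : ℝ) / v₂) - 1)) := by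
  have hac : gaussianReal μ₁ v₁ ≪ gaussianReal μ₂ v₂ :=
    (gaussianReal_absolutelyContinuous μ₁ hv₁).trans (gaussianReal_absolutelyContinuous' μ₂ hv₂)
  have hllr := llr_gaussianReal_gaussianReal μ₁ μ₂ hv₁ hv₂
  have hint₁ := integrable_log_gaussianPDFReal v₁ μ₁ μ₁ hv₁
  have hint₂ := integrable_log_gaussianPDFReal v₁ μ₁ μ₂ hv₂
  rw [klDiv, if_pos ⟨hac, (hint₁.sub hint₂).congr hllr.symm⟩, integral_congr_ae hllr,
    integral_sub hint₁ hint₂, integral_log_gaussianPDFReal μ₁ μ₁ hv₁,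
    integral_log_gaussianPDFReal μ₁ μ₂ hv₂]
  have hv₁' : (0 : ℝ) < v₁ := by positivity
  have hv₂' : (0 : ℝ) < v₂ := by positivity
  rw [log_div hv₁'.ne' hv₂'.ne', log_mul (by positivity) hv₁'.ne',
    log_mul (by positivity) hv₂'.ne']
  congr 1
  field_simp
  ring

end ProbabilityTheory

/-- **KL divergence between centered Gaussians.** For variances `v₁, v₂ > 0`,
`klDiv (N(0, v₁)) (N(0, v₂)) = (1/2) (v₁/v₂ − log (v₁/v₂) − 1)`. -/
theorem klDiv_gaussianReal_zero (v₁ v₂ : ℝ≥0) (hv₁ : 0 < v₁) (hv₂ : 0 < v₂) :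
    klDiv (gaussianReal 0 v₁) (gaussianReal 0 v₂)
      = ENNReal.ofReal
          ((1 / 2) * ((v₁ : ℝ) / (v₂ : ℝ) - Real.log ((v₁ : ℝ) / (v₂ : ℝ)) - 1)) := by
  simpa using klDiv_gaussianReal 0 0 hv₁.ne' hv₂.ne'
end

section
/- Let λ > 0 and a* := 2/λ, and define F : ℝ → ℝ by F a := λ * (a*/a − Real.log (a*/a) − 1). Then for every a > 0, the Fisher-metric gradient of F at a equals 2λ(a − a*): that is, 2 * a^2 * deriv F a = 2 * λ * (a − a*). Consequently, the mode dynamics a' = −2λ(a − a*) of a Gaussian chain is the gradient descent flow a' = −2a² F'(a) of F with respect to the Fisher metric on the variance parameter of centered Gaussians, whose line element is da²/(2a²). -/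
/-- **Mode dynamics of a Gaussian chain as a Fisher gradient flow.**
For `λ > 0`, `a* = 2/λ` and `F a = λ (a*/a − log (a*/a) − 1)`, the Fisher-metric gradient of
`F` at `a > 0` (whose line element is `da²/(2a²)`, so the gradient is `2a² F'(a)`) equals
`2λ(a − a*)`. Hence the mode dynamics `a' = −2λ(a − a*)` is the Fisher gradient descent of `F`. -/
theorem fisher_gradient_of_mode_potential (lam : ℝ) (hlam : 0 < lam) :
    ∀ a : ℝ, 0 < a →
      2 * a ^ 2 *
          deriv (fun a : ℝ => lam * ((2 / lam) / a - Real.log ((2 / lam) / a) - 1)) a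
        = 2 * lam * (a - 2 / lam) := by
  intro a ha
  set c : ℝ := 2 / lam with hc
  have hcpos : 0 < c := by positivity
  have ha0 : a ≠ 0 := ne_of_gt ha
  have hg : HasDerivAt (fun a : ℝ => c / a) (-c / a ^ 2) a := by
    simpa [div_eq_mul_inv, neg_div] using (hasDerivAt_inv ha0).const_mul c
  have hca : c / a ≠ 0 := by positivity
  have hlog : HasDerivAt (fun a : ℝ => Real.log (c / a)) ((-c / a ^ 2) / (c / a)) a :=
    hg.log hca
  have hF : HasDerivAt (fun a : ℝ => lam * (c / a - Real.log (c / a) - 1))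
      (lam * ((-c / a ^ 2) - (-c / a ^ 2) / (c / a))) a :=
    ((hg.sub hlog).sub_const 1).const_mul lam
  rw [hF.deriv]
  have hlam0 : lam ≠ 0 := ne_of_gt hlam
  field_simp [hc]
  ring
end

section
/- Let λ > 0, a* := 2/λ, and F a := λ * (a*/a − Real.log (a*/a) − 1). Let a : ℝ → ℝ be differentiable with a t > 0 and deriv a t = −2*λ*(a t − a*) for all t. Then for all t: deriv (deriv (F ∘ a)) t = 2 * λ * (a*/(a t)) * ((deriv a t)/(a t))^2. (This is the component of the non-metricity tensor of a straightening connection along the gradient flow: F̈ = −C^F(γ̇, γ̇, γ̇) with the choice λ-factor ≡ 0, and it is strictly positive away from equilibrium.) -/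
/-!
The mode equation `a' = -2λ(a - a*)` is the gradient flow of `F` for the Fisher metric
`da²/(2a²)`, so along it `(F ∘ a)' = F'(a) a' = -(a'/a)²/2` (energy dissipation).
Writing `u = a'/a`, the equation gives `a'' = -2λ a'` and hence `u' = -2λu - u²`, so
`(F ∘ a)'' = -u u' = u² (2λ + u)`, and `2λ + u = 2λ a*/a` by the equation once more.
-/

noncomputable section

def modePotential (lam c x : ℝ) : ℝ :=
  lam * (c / x - Real.log (c / x) - 1)

variable {lam c : ℝ}

theorem hasDerivAt_modePotential (hc : c ≠ 0) {x : ℝ} (hx : x ≠ 0) :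
    HasDerivAt (modePotential lam c) (lam * (x - c) / x ^ 2) x := by
  have hdiv : HasDerivAt (fun y : ℝ => c / y) (-c / x ^ 2) x := by
    simpa [div_eq_mul_inv, neg_div] using (hasDerivAt_inv hx).const_mul c
  have hlog := (Real.hasDerivAt_log (div_ne_zero hc hx)).comp x hdiv
  refine (((hdiv.sub hlog).sub_const 1).const_mul lam).congr_deriv ?_
  field_simp
  ring

section ModeEquation

variable {a : ℝ → ℝ} (ha_diff : Differentiable ℝ a) (ha_ne : ∀ t, a t ≠ 0)
  (ha_ode : ∀ t, deriv a t = -2 * lam * (a t - c))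
include ha_diff ha_ne ha_ode

theorem deriv_modePotential_comp_of_ode (hc : c ≠ 0) :
    deriv (modePotential lam c ∘ a) = fun t => -(deriv a t / a t) ^ 2 / 2 := by
  funext t
  rw [((hasDerivAt_modePotential hc (ha_ne t)).comp t (ha_diff t).hasDerivAt).deriv]
  have hlam : lam * (a t - c) = -deriv a t / 2 := by rw [ha_ode t]; ring
  field_simp
  rw [mul_assoc, hlam]
  ring

omit ha_ne in
theorem hasDerivAt_deriv_of_ode (t : ℝ) :
    HasDerivAt (deriv a) (-2 * lam * deriv a t) t := by
  have h := ((ha_diff t).hasDerivAt.sub_const c).const_mul (-2 * lam)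
  rwa [show (fun s => -2 * lam * (a s - c)) = deriv a from (funext ha_ode).symm] at h

theorem hasDerivAt_logDeriv_of_ode (t : ℝ) :
    HasDerivAt (fun s => deriv a s / a s)
      (-2 * lam * (deriv a t / a t) - (deriv a t / a t) ^ 2) t := by
  have hne := ha_ne t
  refine ((hasDerivAt_deriv_of_ode ha_diff ha_ode t).div (ha_diff t).hasDerivAt hne).congr_deriv ?_
  field_simp

theorem deriv_deriv_modePotential_comp_of_ode (hc : c ≠ 0) (t : ℝ) :
    deriv (deriv (modePotential lam c ∘ a)) t
      = 2 * lam * (c / a t) * (deriv a t / a t) ^ 2 := by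
  rw [deriv_modePotential_comp_of_ode ha_diff ha_ne ha_ode hc,
    (((hasDerivAt_logDeriv_of_ode ha_diff ha_ne ha_ode t).fun_pow 2).fun_neg.div_const 2).deriv]
  have hsum : 2 * lam + deriv a t / a t = 2 * lam * (c / a t) := by
    have hne := ha_ne t
    rw [ha_ode t]
    field_simp
    ring
  linear_combination (deriv a t / a t) ^ 2 * hsum

end ModeEquation

end

/-- **Second derivative of the gradient potential along a mode trajectory.**
For `λ > 0`, `a* = 2/λ`, `F a = λ (a*/a − log (a*/a) − 1)`, and any positive differentiable
solution `a` of `a' = −2λ(a − a*)`, one has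
`(F ∘ a)'' = 2 λ (a*/a) (a'/a)²`.
This is `F̈ = −C^F(γ̇, γ̇, γ̇)` for a straightening connection with factor `≡ 0`. -/
theorem second_derivative_mode_potential (lam : ℝ) (hlam : 0 < lam)
    (a : ℝ → ℝ) (ha_diff : Differentiable ℝ a)
    (ha_pos : ∀ t : ℝ, 0 < a t)
    (ha_ode : ∀ t : ℝ, deriv a t = -2 * lam * (a t - 2 / lam)) :
    ∀ t : ℝ,
      deriv (deriv ((fun x : ℝ => lam * ((2 / lam) / x - Real.log ((2 / lam) / x) - 1)) ∘ a)) t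
        = 2 * lam * ((2 / lam) / a t) * (deriv a t / a t) ^ 2 :=
  deriv_deriv_modePotential_comp_of_ode ha_diff (fun t => (ha_pos t).ne') ha_ode
    (div_ne_zero two_ne_zero hlam.ne')
end

section
/- Let λ > 0, a* := 2/λ, and F a := λ * (a*/a − Real.log (a*/a) − 1). Let T̃⁺ > 1 and 0 < T̃⁻ < 1, and set a⁺ t := 2 * (1 + (T̃⁺ − 1) * Real.exp (−2*λ*t)) / λ and a⁻ t := 2 * (1 + (T̃⁻ − 1) * Real.exp (−2*λ*t)) / λ. If the initial conditions are F-equidistant from equilibrium, i.e. F (a⁺ 0) = F (a⁻ 0), then for all t ≥ 0: F (a⁻ t) ≤ F (a⁺ t). That is, for a single normal mode of a Gaussian chain, warming up is faster than cooling down. -/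
/-!
Write `a = a* u` and `e = exp (-2 λ t) ∈ (0, 1]`. Then `F a = λ (u⁻¹ + log u - 1)` and a trajectory
with initial temperature `T̃` is the straight line `u = 1 + (T̃ - 1) e`, traversed from `e = 1`
towards `e = 0`. For `p = T̃⁺ - 1 > 0 > q = T̃⁻ - 1`, the gap `ψ e` between the cooling and the
warming value of `u⁻¹ + log u - 1` vanishes at `e = 0` trivially and at `e = 1` by
`F`-equidistance, and `ψ' e = e ((p / (1 + p e))² - (q / (1 + q e))²)`. The bracket changes
sign only once, from `+` to `-`, so `ψ` rises and then falls on `[0, 1]` and is nonnegative there.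
-/

open Real Set

noncomputable def itakuraSaito (u : ℝ) : ℝ := u⁻¹ + log u - 1

lemma hasDerivAt_itakuraSaito_one_add_mul {k e : ℝ} (h : 0 < 1 + k * e) :
    HasDerivAt (fun x => itakuraSaito (1 + k * x)) (e * (k / (1 + k * e)) ^ 2) e := by
  have hline : HasDerivAt (fun x => 1 + k * x) k e := by
    simpa using ((hasDerivAt_id e).const_mul k).const_add 1
  have H : HasDerivAt (fun x => (1 + k * x)⁻¹ + log (1 + k * x) - 1)
      (-k / (1 + k * e) ^ 2 + k / (1 + k * e)) e :=
    ((hline.inv h.ne').add (hline.log h.ne')).sub_const 1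
  refine H.congr_deriv ?_
  field_simp
  ring

lemma one_add_mul_pos {k e : ℝ} (hk : -1 < k) (he : e ∈ Icc (0 : ℝ) 1) : 0 < 1 + k * e := by
  rcases he.1.eq_or_lt with rfl | he₀
  · simp
  · nlinarith [mul_lt_mul_of_pos_right hk he₀, he.2]

lemma min_le_of_hasDerivAt_of_sign_change {f f' : ℝ → ℝ} {a b c x : ℝ}
    (hf : ∀ y ∈ Icc a b, HasDerivAt f (f' y) y)
    (hinc : ∀ y ∈ Ioo a b, y < c → 0 ≤ f' y) (hdec : ∀ y ∈ Ioo a b, c < y → f' y ≤ 0)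
    (hx : x ∈ Icc a b) : min (f a) (f b) ≤ f x := by
  have hcont : ContinuousOn f (Icc a b) := fun y hy => (hf y hy).continuousAt.continuousWithinAt
  rcases le_total x c with hxc | hcx
  · have hmono : MonotoneOn f (Icc a x) := by
      refine monotoneOn_of_hasDerivWithinAt_nonneg (f' := f') (convex_Icc a x)
        (hcont.mono (Icc_subset_Icc_right hx.2)) (fun y hy => ?_) (fun y hy => ?_)
      all_goals rw [interior_Icc] at hy
      · exact (hf y ⟨hy.1.le, hy.2.le.trans hx.2⟩).hasDerivWithinAt
      · exact hinc y ⟨hy.1, hy.2.trans_le hx.2⟩ (hy.2.trans_le hxc)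
    exact min_le_of_left_le (hmono (left_mem_Icc.2 hx.1) (right_mem_Icc.2 hx.1) hx.1)
  · have hanti : AntitoneOn f (Icc x b) := by
      refine antitoneOn_of_hasDerivWithinAt_nonpos (f' := f') (convex_Icc x b)
        (hcont.mono (Icc_subset_Icc_left hx.1)) (fun y hy => ?_) (fun y hy => ?_)
      all_goals rw [interior_Icc] at hy
      · exact (hf y ⟨hx.1.trans hy.1.le, hy.2.le⟩).hasDerivWithinAt
      · exact hdec y ⟨hx.1.trans_lt hy.1, hy.2⟩ (hcx.trans_lt hy.1)
    exact min_le_of_right_le (hanti (left_mem_Icc.2 hx.2) (right_mem_Icc.2 hx.2) hx.2)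

lemma itakuraSaito_one_add_mul_le {p q e : ℝ} (hp : 0 < p) (hq₁ : -1 < q) (hq₀ : q < 0)
    (hequi : itakuraSaito (1 + p) = itakuraSaito (1 + q)) (he : e ∈ Icc (0 : ℝ) 1) :
    itakuraSaito (1 + q * e) ≤ itakuraSaito (1 + p * e) := by
  set ψ := fun x => itakuraSaito (1 + p * x) - itakuraSaito (1 + q * x)
  have hψ : ∀ x ∈ Icc (0 : ℝ) 1,
      HasDerivAt ψ (x * (p / (1 + p * x)) ^ 2 - x * (q / (1 + q * x)) ^ 2) x := fun x hx =>
    (hasDerivAt_itakuraSaito_one_add_mul (one_add_mul_pos (by linarith) hx)).sub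
      (hasDerivAt_itakuraSaito_one_add_mul (one_add_mul_pos hq₁ hx))
  -- `p / (1 + p x) ≥ -q / (1 + q x)` exactly when `x ≤ c`.
  set c := -(p + q) / (2 * p * q)
  have hpq : p * q < 0 := mul_neg_of_pos_of_neg hp hq₀
  have hsign : ∀ x ∈ Ioo (0 : ℝ) 1,
      0 ≤ x * (p / (1 + p * x)) ^ 2 - x * (q / (1 + q * x)) ^ 2 ↔ x ≤ c := fun x hx => by
    have hP := one_add_mul_pos (k := p) (by linarith) (Ioo_subset_Icc_self hx)
    have hQ := one_add_mul_pos hq₁ (Ioo_subset_Icc_self hx)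
    rw [← mul_sub, mul_nonneg_iff_of_pos_left hx.1, sub_nonneg, ← neg_sq (q / _), ← neg_div,
      sq_le_sq₀ (div_nonneg (by linarith) hQ.le) (div_pos hp hP).le,
      div_le_div_iff₀ hQ hP, le_div_iff_of_neg (by linarith)]
    constructor <;> intro h <;> nlinarith
  have hmin := min_le_of_hasDerivAt_of_sign_change hψ
    (fun x hx hxc => (hsign x hx).2 hxc.le)
    (fun x hx hcx => (not_le.1 (mt (hsign x hx).1 hcx.not_ge)).le) he
  have hψ0 : ψ 0 = 0 := by simp [ψ]
  have hψ1 : ψ 1 = 0 := by simp [ψ, hequi]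
  rw [hψ0, hψ1, min_self] at hmin
  exact sub_nonneg.1 hmin

/-- **Warming up is faster than cooling down (single mode).**
For `λ > 0`, `a* = 2/λ`, `F a = λ (a*/a − log (a*/a) − 1)`, cooling trajectory `a⁺` with
`T̃⁺ > 1` and warming trajectory `a⁻` with `0 < T̃⁻ < 1`, if the initial conditions are
`F`-equidistant from equilibrium, then `F (a⁻ t) ≤ F (a⁺ t)` for all `t ≥ 0`. -/
theorem warming_faster_than_cooling_single_mode
    (lam : ℝ) (hlam : 0 < lam)
    (F : ℝ → ℝ)
    (hF : ∀ x : ℝ, F x = lam * ((2 / lam) / x - Real.log ((2 / lam) / x) - 1))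
    (Tp Tm : ℝ) (hTp : 1 < Tp) (hTm0 : 0 < Tm) (hTm1 : Tm < 1)
    (ap am : ℝ → ℝ)
    (hap : ∀ t : ℝ, ap t = 2 * (1 + (Tp - 1) * Real.exp (-2 * lam * t)) / lam)
    (ham : ∀ t : ℝ, am t = 2 * (1 + (Tm - 1) * Real.exp (-2 * lam * t)) / lam)
    (heq : F (ap 0) = F (am 0)) :
    ∀ t : ℝ, 0 ≤ t → F (am t) ≤ F (ap t) := by
  have hFu : ∀ u, 0 < u → F (2 * u / lam) = lam * itakuraSaito u := fun u hu => by
    rw [hF, itakuraSaito, show 2 / lam / (2 * u / lam) = u⁻¹ by field_simp, log_inv]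
    ring
  have hequi : itakuraSaito (1 + (Tp - 1)) = itakuraSaito (1 + (Tm - 1)) := by
    rw [hap, ham, mul_zero, exp_zero, mul_one, mul_one, hFu _ (by linarith),
      hFu _ (by linarith)] at heq
    exact mul_left_cancel₀ hlam.ne' heq
  intro t ht
  have he : exp (-2 * lam * t) ∈ Icc (0 : ℝ) 1 :=
    ⟨(exp_pos _).le, exp_le_one_iff.2 (by nlinarith)⟩
  rw [hap, ham, hFu _ (one_add_mul_pos (by linarith) he), hFu _ (one_add_mul_pos (by linarith) he)]
  exact mul_le_mul_of_nonneg_left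
    (itakuraSaito_one_add_mul_le (by linarith) (by linarith) (by linarith) hequi he) hlam.le
end
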